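/- arXiv:2308.08166 — 10 statements merged into one kernel-verified Lean document; each statement's English description precedes it below -/
import Mathlib

section
/- Let G be a (K5-e)-free graph and let A1, A2, A3, A4 be four mutually disjoint nonempty subsets of V(G) such that for all i ≠ j, every vertex of Ai is adjacent to every vertex of Aj. Then A1 ∪ A2 ∪ A3 ∪ A4 is a clique in G. -/
open SimpleGraph

/-- The complete graph on 5 vertices minus one edge. -/
def K5e : SimpleGraph (Fin 5) := (⊤ : SimpleGraph (Fin 5)).deleteEdges {s(0, 1)}

/-- `H` has an induced copy in `G`. -/
def HasInducedCopy {W V : Type*} (H : SimpleGraph W) (G : SimpleGraph V) : Prop :=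
  ∃ f : W ↪ V, ∀ a b : W, G.Adj (f a) (f b) ↔ H.Adj a b

/-- `G` contains no induced subgraph isomorphic to `H`. -/
def IsInducedFree {V W : Type*} (G : SimpleGraph V) (H : SimpleGraph W) : Prop :=
  ¬ HasInducedCopy H G

theorem stmt_2 {V : Type*} (G : SimpleGraph V) (hG : IsInducedFree G K5e)
    (A : Fin 4 → Set V)
    (hne : ∀ i, (A i).Nonempty)
    (hdisj : ∀ i j, i ≠ j → Disjoint (A i) (A j))
    (hcom : ∀ i j, i ≠ j → ∀ a ∈ A i, ∀ b ∈ A j, G.Adj a b) :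
    G.IsClique (⋃ i, A i) := by
  intro x hx y hy hxy
  simp only [Set.mem_iUnion] at hx hy
  obtain ⟨i, hxi⟩ := hx
  obtain ⟨j, hyj⟩ := hy
  by_cases hij : i = j
  · subst hij
    by_contra hadj
    obtain ⟨c1, hc1⟩ := hne (i + 1)
    obtain ⟨c2, hc2⟩ := hne (i + 2)
    obtain ⟨c3, hc3⟩ := hne (i + 3)
    have key : ∀ k : Fin 4, k ≠ k + 1 ∧ k ≠ k + 2 ∧ k ≠ k + 3 ∧
        k + 1 ≠ k + 2 ∧ k + 1 ≠ k + 3 ∧ k + 2 ≠ k + 3 := by decide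
    obtain ⟨n1, n2, n3, n12, n13, n23⟩ := key i
    have hd : ∀ k l : Fin 4, k ≠ l → ∀ u ∈ A k, ∀ v ∈ A l, u ≠ v := by
      intro k l h u hu v hv he
      exact (hdisj k l h).ne_of_mem hu hv he
    have a1 : G.Adj x c1 := hcom _ _ n1 x hxi c1 hc1
    have a2 : G.Adj x c2 := hcom _ _ n2 x hxi c2 hc2
    have a3 : G.Adj x c3 := hcom _ _ n3 x hxi c3 hc3
    have b1 : G.Adj y c1 := hcom _ _ n1 y hyj c1 hc1
    have b2 : G.Adj y c2 := hcom _ _ n2 y hyj c2 hc2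
    have b3 : G.Adj y c3 := hcom _ _ n3 y hyj c3 hc3
    have c12 : G.Adj c1 c2 := hcom _ _ n12 c1 hc1 c2 hc2
    have c13 : G.Adj c1 c3 := hcom _ _ n13 c1 hc1 c3 hc3
    have c23 : G.Adj c2 c3 := hcom _ _ n23 c2 hc2 c3 hc3
    have e1 : x ≠ c1 := hd _ _ n1 x hxi c1 hc1
    have e2 : x ≠ c2 := hd _ _ n2 x hxi c2 hc2
    have e3 : x ≠ c3 := hd _ _ n3 x hxi c3 hc3
    have f1 : y ≠ c1 := hd _ _ n1 y hyj c1 hc1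
    have f2 : y ≠ c2 := hd _ _ n2 y hyj c2 hc2
    have f3 : y ≠ c3 := hd _ _ n3 y hyj c3 hc3
    have g12 : c1 ≠ c2 := hd _ _ n12 c1 hc1 c2 hc2
    have g13 : c1 ≠ c3 := hd _ _ n13 c1 hc1 c3 hc3
    have g23 : c2 ≠ c3 := hd _ _ n23 c2 hc2 c3 hc3
    apply hG
    refine ⟨⟨![x, y, c1, c2, c3], ?_⟩, ?_⟩
    · rw [← List.nodup_ofFn]
      simp [hxy, e1, e2, e3, f1, f2, f3, g12, g13, g23]
    · intro a b
      fin_cases a <;> fin_cases b <;>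
        simp [K5e, hadj, a1, a2, a3, b1, b2, b3, c12, c13, c23, a3.symm, b3.symm, c13.symm, c23.symm,
          G.adj_comm x, G.adj_comm y, G.adj_comm c1, G.adj_comm c2]
  · exact hcom i j hij x hxi y hyj
end

section
/- Let G be a (K5-e)-free graph containing a triangle on vertices v1, v2, v3. Let Y1 be the set of vertices outside the triangle adjacent to v2 and v3 but not v1, and let Z be the set of vertices outside the triangle adjacent to all of v1, v2, v3. Then the subgraph induced by Y1 is P3-free, and no vertex of Y1 ∪ Y2 ∪ Y3 is adjacent to any vertex of Z, where Y2, Y3 are defined analogously. -/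
open SimpleGraph

lemma k5e_copy {V : Type*} (G : SimpleGraph V) (w0 w1 w2 w3 w4 : V)
    (h01 : w0 ≠ w1) (n01 : ¬ G.Adj w0 w1)
    (a02 : G.Adj w0 w2) (a03 : G.Adj w0 w3) (a04 : G.Adj w0 w4)
    (a12 : G.Adj w1 w2) (a13 : G.Adj w1 w3) (a14 : G.Adj w1 w4)
    (a23 : G.Adj w2 w3) (a24 : G.Adj w2 w4) (a34 : G.Adj w3 w4) :
    HasInducedCopy K5e G := by
  have n10 : ¬ G.Adj w1 w0 := fun h => n01 h.symm
  have inj : Function.Injective ![w0, w1, w2, w3, w4] := by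
    intro a b hab
    fin_cases a <;> fin_cases b <;> simp_all
  refine ⟨⟨![w0, w1, w2, w3, w4], inj⟩, ?_⟩
  intro a b
  show G.Adj (![w0,w1,w2,w3,w4] a) (![w0,w1,w2,w3,w4] b) ↔ K5e.Adj a b
  fin_cases a <;> fin_cases b <;>
    simp [K5e, n01, n10, a02, a03, a04, a12, a13, a14, a23, a24, a34,
      a02.symm, a03.symm, a04.symm, a12.symm, a13.symm, a14.symm,
      a23.symm, a24.symm, a34.symm]

theorem stmt_4 {V : Type*} (G : SimpleGraph V) (hG : IsInducedFree G K5e)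
    (v1 v2 v3 : V) (h12 : G.Adj v1 v2) (h13 : G.Adj v1 v3) (h23 : G.Adj v2 v3)
    (Y1 Y2 Y3 Z : Set V)
    (hY1 : Y1 = {u | u ∉ ({v1, v2, v3} : Set V) ∧ ¬ G.Adj u v1 ∧ G.Adj u v2 ∧ G.Adj u v3})
    (hY2 : Y2 = {u | u ∉ ({v1, v2, v3} : Set V) ∧ G.Adj u v1 ∧ ¬ G.Adj u v2 ∧ G.Adj u v3})
    (hY3 : Y3 = {u | u ∉ ({v1, v2, v3} : Set V) ∧ G.Adj u v1 ∧ G.Adj u v2 ∧ ¬ G.Adj u v3})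
    (hZ : Z = {u | u ∉ ({v1, v2, v3} : Set V) ∧ G.Adj u v1 ∧ G.Adj u v2 ∧ G.Adj u v3}) :
    IsInducedFree (G.induce Y1) (pathGraph 3) ∧
      ∀ y ∈ Y1 ∪ Y2 ∪ Y3, ∀ z ∈ Z, ¬ G.Adj y z := by
  constructor
  · rintro ⟨f, hf⟩
    set a : V := (f 0 : V)
    set b : V := (f 1 : V)
    set c : V := (f 2 : V)
    have ha : a ∈ Y1 := (f 0).2
    have hb : b ∈ Y1 := (f 1).2
    have hc : c ∈ Y1 := (f 2).2
    have hab : G.Adj a b := (hf 0 1).2 (by simp [pathGraph_adj])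
    have hbc : G.Adj b c := (hf 1 2).2 (by simp [pathGraph_adj])
    have hac : ¬ G.Adj a c := by
      intro h
      exact absurd ((hf 0 2).1 h) (by simp [pathGraph_adj])
    have hanec : a ≠ c := by
      intro h
      have : f 0 = f 2 := Subtype.ext h
      simpa using f.injective this
    rw [hY1] at ha hb hc
    exact hG (k5e_copy G a c b v2 v3 hanec hac
      hab ha.2.2.1 ha.2.2.2 hbc.symm hc.2.2.1 hc.2.2.2 hb.2.2.1 hb.2.2.2 h23)
  · rintro y hy z hz hyz
    rw [hZ] at hz
    obtain ⟨hznt, hz1, hz2, hz3⟩ := hz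
    rcases hy with (hy | hy) | hy
    · rw [hY1] at hy
      obtain ⟨hnt, n1, a2, a3⟩ := hy
      have hne : v1 ≠ y := fun h => hnt (by simp [← h])
      exact hG (k5e_copy G v1 y v2 v3 z hne (fun h => n1 h.symm)
        h12 h13 hz1.symm a2 a3 hyz h23 hz2.symm hz3.symm)
    · rw [hY2] at hy
      obtain ⟨hnt, a1, n2, a3⟩ := hy
      have hne : v2 ≠ y := fun h => hnt (by simp [← h])
      exact hG (k5e_copy G v2 y v1 v3 z hne (fun h => n2 h.symm)
        h12.symm h23 hz2.symm a1 a3 hyz h13 hz1.symm hz3.symm)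
    · rw [hY3] at hy
      obtain ⟨hnt, a1, a2, n3⟩ := hy
      have hne : v3 ≠ y := fun h => hnt (by simp [← h])
      exact hG (k5e_copy G v3 y v1 v2 z hne (fun h => n3 h.symm)
        h13.symm h23.symm hz3.symm a1 a2 hyz h12 hz1.symm hz2.symm)
end

section
/- Let G be a P5-free graph containing a triangle on vertices v1, v2, v3. Define X1 as the set of vertices outside the triangle whose only neighbor among {v1,v2,v3} is v1, X2 analogously for v2, Y3 as the set of vertices outside the triangle adjacent to exactly v1 and v2, and L as the set of vertices with no neighbor in {v1,v2,v3}. Then the vertex set of each connected component of the subgraph induced by X1 ∪ L is a homogeneous set in the subgraph induced by X1 ∪ X2 ∪ Y3 ∪ L. -/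
open SimpleGraph

/-!
A vertex `w` outside `X1 ∪ L` with a neighbour in a component `C` of `X1 ∪ L` lies in `X2 ∪ Y3`,
so `w` is adjacent to `v2` but not to `v3`, while no vertex of `C` sees `v2` or `v3`. If `w` missed
some vertex of `C`, a path inside `C` would give an edge `ab` of `C` with `w ~ a` and `w ≁ b`, and
then `b - a - w - v2 - v3` would be an induced `P5`.
-/

namespace SimpleGraph

variable {V : Type*} {G : SimpleGraph V}

lemma hasInducedCopy_pathGraph_five {x0 x1 x2 x3 x4 : V}
    (e01 : G.Adj x0 x1) (e12 : G.Adj x1 x2) (e23 : G.Adj x2 x3) (e34 : G.Adj x3 x4)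
    (n02 : ¬G.Adj x0 x2) (n03 : ¬G.Adj x0 x3) (n04 : ¬G.Adj x0 x4)
    (n13 : ¬G.Adj x1 x3) (n14 : ¬G.Adj x1 x4) (n24 : ¬G.Adj x2 x4)
    (d02 : x0 ≠ x2) (d03 : x0 ≠ x3) (d04 : x0 ≠ x4)
    (d13 : x1 ≠ x3) (d14 : x1 ≠ x4) (d24 : x2 ≠ x4) :
    HasInducedCopy (pathGraph 5) G := by
  have := e01.ne; have := e12.ne; have := e23.ne; have := e34.ne
  have := e01.symm; have := e12.symm; have := e23.symm; have := e34.symm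
  have := mt G.adj_symm n02; have := mt G.adj_symm n03; have := mt G.adj_symm n04
  have := mt G.adj_symm n13; have := mt G.adj_symm n14; have := mt G.adj_symm n24
  refine ⟨⟨![x0, x1, x2, x3, x4], fun i j hij => ?_⟩, fun i j => ?_⟩
  · fin_cases i <;> fin_cases j <;> simp_all [eq_comm]
  · change G.Adj (![x0, x1, x2, x3, x4] i) (![x0, x1, x2, x3, x4] j) ↔ _
    fin_cases i <;> fin_cases j <;> simp_all [pathGraph_adj]

lemma IsInducedFree.adj_of_mem_supp_of_adj (hG : IsInducedFree G (pathGraph 5)) {S : Set V}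
    {v2 v3 w : V} (h23 : G.Adj v2 v3) (hS : ∀ u ∈ S, ¬G.Adj u v2 ∧ ¬G.Adj u v3) (hwS : w ∉ S)
    (hw2 : G.Adj w v2) (hw3 : ¬G.Adj w v3) (hwv3 : w ≠ v3) {c : (G.induce S).ConnectedComponent}
    {s t : S} (hs : s ∈ c.supp) (ht : t ∈ c.supp) (hws : G.Adj w s) : G.Adj w t := by
  by_contra hwt
  obtain ⟨p⟩ := c.reachable_of_mem_supp hs ht
  obtain ⟨⟨⟨a, b⟩, hab⟩, -, hwa, hwb⟩ := p.exists_boundary_dart {x | G.Adj w x} hws hwt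
  have hab : G.Adj a b := induce_adj.mp hab
  obtain ⟨ha2, ha3⟩ := hS a a.2
  obtain ⟨hb2, hb3⟩ := hS b b.2
  -- `v2` and `v3` are adjacent, so neither of them lies in `S`.
  have hne : ∀ u ∈ S, u ≠ v2 ∧ u ≠ v3 := fun u hu =>
    ⟨fun h => (hS u hu).2 (h ▸ h23), fun h => (hS u hu).1 (h ▸ h23.symm)⟩
  exact hG <| hasInducedCopy_pathGraph_five hab.symm hwa.symm hw2 h23 (mt G.adj_symm hwb)
    hb2 hb3 ha2 ha3 hw3 (fun h => hwS (h ▸ b.2)) (hne b b.2).1 (hne b b.2).2 (hne a a.2).1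
    (hne a a.2).2 hwv3

end SimpleGraph

theorem stmt_5_general {V : Type*} (G : SimpleGraph V) (hG : IsInducedFree G (pathGraph 5))
    (v1 v2 v3 : V) (h23 : G.Adj v2 v3)
    (X1 X2 Y3 L : Set V)
    (hX1 : X1 = {u | u ∉ ({v1, v2, v3} : Set V) ∧ G.Adj u v1 ∧ ¬ G.Adj u v2 ∧ ¬ G.Adj u v3})
    (hX2 : X2 = {u | u ∉ ({v1, v2, v3} : Set V) ∧ ¬ G.Adj u v1 ∧ G.Adj u v2 ∧ ¬ G.Adj u v3})
    (hY3 : Y3 = {u | u ∉ ({v1, v2, v3} : Set V) ∧ G.Adj u v1 ∧ G.Adj u v2 ∧ ¬ G.Adj u v3})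
    (hL : L = {u | u ∉ ({v1, v2, v3} : Set V) ∧ ¬ G.Adj u v1 ∧ ¬ G.Adj u v2 ∧ ¬ G.Adj u v3}) :
    ∀ c : (G.induce (X1 ∪ L)).ConnectedComponent,
      ∀ w ∈ (X1 ∪ X2 ∪ Y3 ∪ L) \ (Subtype.val '' c.supp),
        (∃ s ∈ Subtype.val '' c.supp, G.Adj w s) →
          ∀ s ∈ Subtype.val '' c.supp, G.Adj w s := by
  rintro c w ⟨hw, hwc⟩ ⟨_, ⟨s, hs, rfl⟩, hws⟩ _ ⟨t, ht, rfl⟩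
  have hS : ∀ u ∈ X1 ∪ L, ¬G.Adj u v2 ∧ ¬G.Adj u v3 := by
    rw [hX1, hL]
    rintro u (⟨-, -, hu2, hu3⟩ | ⟨-, -, hu2, hu3⟩) <;> exact ⟨hu2, hu3⟩
  have hwS : w ∉ X1 ∪ L := fun hwS =>
    hwc ⟨⟨w, hwS⟩, c.mem_supp_of_adj_mem_supp hs (G.induce_adj.mpr hws.symm), rfl⟩
  obtain ⟨hwv, hw2, hw3⟩ : w ∉ ({v1, v2, v3} : Set V) ∧ G.Adj w v2 ∧ ¬G.Adj w v3 := by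
    rw [hX2, hY3] at hw
    rcases hw with ((hw | ⟨hwv, -, hw2, hw3⟩) | ⟨hwv, -, hw2, hw3⟩) | hw
    exacts [absurd (.inl hw) hwS, ⟨hwv, hw2, hw3⟩, ⟨hwv, hw2, hw3⟩, absurd (.inr hw) hwS]
  exact hG.adj_of_mem_supp_of_adj h23 hS hwS hw2 hw3 (fun h => hwv (by simp [h])) hs ht hws

theorem stmt_5 {V : Type*} (G : SimpleGraph V) (hG : IsInducedFree G (pathGraph 5))
    (v1 v2 v3 : V) (h12 : G.Adj v1 v2) (h13 : G.Adj v1 v3) (h23 : G.Adj v2 v3)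
    (X1 X2 Y3 L : Set V)
    (hX1 : X1 = {u | u ∉ ({v1, v2, v3} : Set V) ∧ G.Adj u v1 ∧ ¬ G.Adj u v2 ∧ ¬ G.Adj u v3})
    (hX2 : X2 = {u | u ∉ ({v1, v2, v3} : Set V) ∧ ¬ G.Adj u v1 ∧ G.Adj u v2 ∧ ¬ G.Adj u v3})
    (hY3 : Y3 = {u | u ∉ ({v1, v2, v3} : Set V) ∧ G.Adj u v1 ∧ G.Adj u v2 ∧ ¬ G.Adj u v3})
    (hL : L = {u | u ∉ ({v1, v2, v3} : Set V) ∧ ¬ G.Adj u v1 ∧ ¬ G.Adj u v2 ∧ ¬ G.Adj u v3}) :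
    ∀ c : (G.induce (X1 ∪ L)).ConnectedComponent,
      ∀ w ∈ (X1 ∪ X2 ∪ Y3 ∪ L) \ (Subtype.val '' c.supp),
        (∃ s ∈ Subtype.val '' c.supp, G.Adj w s) →
          ∀ s ∈ Subtype.val '' c.supp, G.Adj w s :=
  stmt_5_general G hG v1 v2 v3 h23 X1 X2 Y3 L hX1 hX2 hY3 hL
end

section
/- Let G be a (K5-e)-free graph containing a triangle on vertices v1, v2, v3, and let Z be the set of vertices outside the triangle adjacent to all of v1, v2, v3. Then every vertex x outside the triangle whose only neighbor among {v1,v2,v3} is some single vi has at most one neighbor in Z. -/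
open SimpleGraph

/-! Let `x` see only the corner `u` of the triangle `u v w`. Two distinct common neighbours
`z, z'` of the triangle are adjacent, for otherwise they induce `K₅ - e` together with the
triangle; so if `x` sees both, then `x` and `v` are two non-adjacent vertices joined to the
triangle `z z' u`, another induced `K₅ - e`. -/

namespace SimpleGraph

variable {V : Type*} {G : SimpleGraph V}

theorem hasInducedCopy_K5e {a b c d e : V} (hab : a ≠ b) (hnab : ¬ G.Adj a b)
    (hcd : G.Adj c d) (hce : G.Adj c e) (hde : G.Adj d e)
    (hac : G.Adj a c) (had : G.Adj a d) (hae : G.Adj a e)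
    (hbc : G.Adj b c) (hbd : G.Adj b d) (hbe : G.Adj b e) :
    HasInducedCopy K5e G := by
  refine ⟨⟨![a, b, c, d, e], fun i j hij => ?_⟩, fun i j => ?_⟩
  · have := hac.ne; have := had.ne; have := hae.ne; have := hbc.ne; have := hbd.ne
    have := hbe.ne; have := hcd.ne; have := hce.ne; have := hde.ne
    fin_cases i <;> fin_cases j <;> simp_all [eq_comm]
  · change G.Adj (![a, b, c, d, e] i) (![a, b, c, d, e] j) ↔ _
    fin_cases i <;> fin_cases j <;> simp_all [K5e, G.adj_comm]

theorem adj_of_adj_triangle (hG : IsInducedFree G K5e) {u v w z z' : V}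
    (huv : G.Adj u v) (huw : G.Adj u w) (hvw : G.Adj v w)
    (hzu : G.Adj z u) (hzv : G.Adj z v) (hzw : G.Adj z w)
    (hz'u : G.Adj z' u) (hz'v : G.Adj z' v) (hz'w : G.Adj z' w) (hzz' : z ≠ z') :
    G.Adj z z' := by
  by_contra hnzz'
  exact hG (hasInducedCopy_K5e hzz' hnzz' huv huw hvw hzu hzv hzw hz'u hz'v hz'w)

theorem eq_of_adj_of_adj_triangle (hG : IsInducedFree G K5e) {u v w x z z' : V}
    (huv : G.Adj u v) (huw : G.Adj u w) (hvw : G.Adj v w)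
    (hxu : G.Adj x u) (hxv : ¬ G.Adj x v) (hxw : ¬ G.Adj x w)
    (hzu : G.Adj z u) (hzv : G.Adj z v) (hzw : G.Adj z w)
    (hz'u : G.Adj z' u) (hz'v : G.Adj z' v) (hz'w : G.Adj z' w)
    (hxz : G.Adj x z) (hxz' : G.Adj x z') : z = z' := by
  by_contra hzz'
  have hadj := adj_of_adj_triangle hG huv huw hvw hzu hzv hzw hz'u hz'v hz'w hzz'
  have hxv_ne : x ≠ v := fun h => hxw (h ▸ hvw)
  exact hG (hasInducedCopy_K5e hxv_ne hxv hadj hzu hz'u hxz hxz' hxu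
    hzv.symm hz'v.symm huv.symm)

end SimpleGraph

theorem stmt_6_general {V : Type*} (G : SimpleGraph V) (hG : IsInducedFree G K5e)
    (v1 v2 v3 : V) (h12 : G.Adj v1 v2) (h13 : G.Adj v1 v3) (h23 : G.Adj v2 v3)
    (Z : Set V)
    (hZ : Z = {u | u ∉ ({v1, v2, v3} : Set V) ∧ G.Adj u v1 ∧ G.Adj u v2 ∧ G.Adj u v3})
    (x : V)
    (hx1 : (G.Adj x v1 ∧ ¬ G.Adj x v2 ∧ ¬ G.Adj x v3) ∨
           (¬ G.Adj x v1 ∧ G.Adj x v2 ∧ ¬ G.Adj x v3) ∨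
           (¬ G.Adj x v1 ∧ ¬ G.Adj x v2 ∧ G.Adj x v3)) :
    ∀ z ∈ Z, ∀ z' ∈ Z, G.Adj x z → G.Adj x z' → z = z' := by
  subst hZ
  rintro z ⟨-, hz1, hz2, hz3⟩ z' ⟨-, hz'1, hz'2, hz'3⟩ hxz hxz'
  rcases hx1 with ⟨hx1, hx2, hx3⟩ | ⟨hx1, hx2, hx3⟩ | ⟨hx1, hx2, hx3⟩
  · exact eq_of_adj_of_adj_triangle hG h12 h13 h23 hx1 hx2 hx3
      hz1 hz2 hz3 hz'1 hz'2 hz'3 hxz hxz'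
  · exact eq_of_adj_of_adj_triangle hG h12.symm h23 h13 hx2 hx1 hx3
      hz2 hz1 hz3 hz'2 hz'1 hz'3 hxz hxz'
  · exact eq_of_adj_of_adj_triangle hG h13.symm h23.symm h12 hx3 hx1 hx2
      hz3 hz1 hz2 hz'3 hz'1 hz'2 hxz hxz'

theorem stmt_6 {V : Type*} (G : SimpleGraph V) (hG : IsInducedFree G K5e)
    (v1 v2 v3 : V) (h12 : G.Adj v1 v2) (h13 : G.Adj v1 v3) (h23 : G.Adj v2 v3)
    (Z : Set V)
    (hZ : Z = {u | u ∉ ({v1, v2, v3} : Set V) ∧ G.Adj u v1 ∧ G.Adj u v2 ∧ G.Adj u v3})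
    (x : V) (hx : x ∉ ({v1, v2, v3} : Set V))
    (hx1 : (G.Adj x v1 ∧ ¬ G.Adj x v2 ∧ ¬ G.Adj x v3) ∨
           (¬ G.Adj x v1 ∧ G.Adj x v2 ∧ ¬ G.Adj x v3) ∨
           (¬ G.Adj x v1 ∧ ¬ G.Adj x v2 ∧ G.Adj x v3)) :
    ∀ z ∈ Z, ∀ z' ∈ Z, G.Adj x z → G.Adj x z' → z = z' :=
  stmt_6_general G hG v1 v2 v3 h12 h13 h23 Z hZ x hx1
end

section
/- Let G be a P5-free graph containing a triangle on vertices v1, v2, v3. For i ∈ {1,2,3}, let Xi be the set of vertices outside the triangle whose unique neighbor in the triangle is vi, and let L be the set of vertices with no neighbor in the triangle. If some vertex t ∈ L has a neighbor in X1, then t is adjacent to every vertex of X2 ∪ X3, and moreover every vertex of X1 is adjacent to every vertex of X2 ∪ X3. -/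
open SimpleGraph

/-!
Both parts exhibit an induced `P5` whenever the claimed edge is missing. If `t ≁ y` for
`y ∈ X2`, then `t - x - y - v2 - v3` (when `x ∼ y`) or `t - x - v1 - v2 - y` (when `x ≁ y`) is
induced. If `a ≁ y` for `a ∈ X1` and `y ∈ X2`, where `t ∼ y` by the first part, then
`y - t - a - v1 - v3` (when `t ∼ a`) or `t - y - v2 - v1 - a` (when `t ≁ a`) is induced.
Exchanging `v2` and `v3` handles `X3`.
-/

theorem hasInducedCopy_pathGraph_five {V : Type*} {G : SimpleGraph V} {a b c d e : V}
    (hab : G.Adj a b) (hbc : G.Adj b c) (hcd : G.Adj c d) (hde : G.Adj d e)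
    (hac : ¬G.Adj a c) (had : ¬G.Adj a d) (hae : ¬G.Adj a e)
    (hbd : ¬G.Adj b d) (hbe : ¬G.Adj b e) (hce : ¬G.Adj c e) :
    HasInducedCopy (pathGraph 5) G := by
  have hadj : ∀ i j,
      G.Adj (![a, b, c, d, e] i) (![a, b, c, d, e] j) ↔ (pathGraph 5).Adj i j := by
    intro i j
    fin_cases i <;> fin_cases j <;> simp [pathGraph_adj, G.adj_comm, *]
  refine ⟨⟨![a, b, c, d, e], fun i j hij => ?_⟩, hadj⟩
  fin_cases i <;> fin_cases j <;> simp_all [G.adj_comm]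

section

variable {V : Type*} {G : SimpleGraph V} {v1 v2 v3 t x y a : V}

theorem IsInducedFree.anticomplete_adj_private_of_adj_private
    (hG : IsInducedFree G (pathGraph 5))
    (h12 : G.Adj v1 v2) (h23 : G.Adj v2 v3)
    (ht1 : ¬G.Adj t v1) (ht2 : ¬G.Adj t v2) (ht3 : ¬G.Adj t v3)
    (htx : G.Adj t x) (hx1 : G.Adj x v1) (hx2 : ¬G.Adj x v2) (hx3 : ¬G.Adj x v3)
    (hy1 : ¬G.Adj y v1) (hy2 : G.Adj y v2) (hy3 : ¬G.Adj y v3) :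
    G.Adj t y := by
  by_contra hty
  by_cases hxy : G.Adj x y
  · exact hG (hasInducedCopy_pathGraph_five htx hxy hy2 h23 hty ht2 ht3 hx2 hx3 hy3)
  · exact hG (hasInducedCopy_pathGraph_five htx hx1 h12 hy2.symm ht1 ht2 hty hx2 hxy
      (fun h => hy1 h.symm))

theorem IsInducedFree.private_adj_private_of_anticomplete_adj
    (hG : IsInducedFree G (pathGraph 5))
    (h12 : G.Adj v1 v2) (h13 : G.Adj v1 v3)
    (ht1 : ¬G.Adj t v1) (ht2 : ¬G.Adj t v2) (ht3 : ¬G.Adj t v3)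
    (ha1 : G.Adj a v1) (ha2 : ¬G.Adj a v2) (ha3 : ¬G.Adj a v3)
    (hy1 : ¬G.Adj y v1) (hy2 : G.Adj y v2) (hy3 : ¬G.Adj y v3) (hty : G.Adj t y) :
    G.Adj a y := by
  by_contra hay
  by_cases hta : G.Adj t a
  · exact hG (hasInducedCopy_pathGraph_five hty.symm hta ha1 h13 (fun h => hay h.symm) hy1 hy3
      ht1 ht3 ha3)
  · exact hG (hasInducedCopy_pathGraph_five hty hy2 h12.symm ha1.symm ht2 ht1 hta hy1
      (fun h => hay h.symm) (fun h => ha2 h.symm))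

end

theorem stmt_7 {V : Type*} (G : SimpleGraph V) (hG : IsInducedFree G (pathGraph 5))
    (v1 v2 v3 : V) (h12 : G.Adj v1 v2) (h13 : G.Adj v1 v3) (h23 : G.Adj v2 v3)
    (X1 X2 X3 L : Set V)
    (hX1 : X1 = {u | u ∉ ({v1, v2, v3} : Set V) ∧ G.Adj u v1 ∧ ¬ G.Adj u v2 ∧ ¬ G.Adj u v3})
    (hX2 : X2 = {u | u ∉ ({v1, v2, v3} : Set V) ∧ ¬ G.Adj u v1 ∧ G.Adj u v2 ∧ ¬ G.Adj u v3})
    (hX3 : X3 = {u | u ∉ ({v1, v2, v3} : Set V) ∧ ¬ G.Adj u v1 ∧ ¬ G.Adj u v2 ∧ G.Adj u v3})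
    (hL : L = {u | u ∉ ({v1, v2, v3} : Set V) ∧ ¬ G.Adj u v1 ∧ ¬ G.Adj u v2 ∧ ¬ G.Adj u v3})
    (t : V) (ht : t ∈ L) (x : V) (hx : x ∈ X1) (htx : G.Adj t x) :
    (∀ y ∈ X2 ∪ X3, G.Adj t y) ∧ (∀ a ∈ X1, ∀ y ∈ X2 ∪ X3, G.Adj a y) := by
  subst hX1 hL
  obtain ⟨-, ht1, ht2, ht3⟩ := ht
  obtain ⟨-, hx1, hx2, hx3⟩ := hx
  have ht_adj : ∀ y ∈ X2 ∪ X3, G.Adj t y := by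
    subst hX2 hX3
    rintro y (⟨-, hy1, hy2, hy3⟩ | ⟨-, hy1, hy2, hy3⟩)
    · exact hG.anticomplete_adj_private_of_adj_private h12 h23
        ht1 ht2 ht3 htx hx1 hx2 hx3 hy1 hy2 hy3
    · exact hG.anticomplete_adj_private_of_adj_private h13 h23.symm
        ht1 ht3 ht2 htx hx1 hx3 hx2 hy1 hy3 hy2
  refine ⟨ht_adj, ?_⟩
  subst hX2 hX3
  rintro a ⟨-, ha1, ha2, ha3⟩ y hy
  have hty := ht_adj y hy
  obtain ⟨-, hy1, hy2, hy3⟩ | ⟨-, hy1, hy2, hy3⟩ := hy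
  · exact hG.private_adj_private_of_anticomplete_adj h12 h13
      ht1 ht2 ht3 ha1 ha2 ha3 hy1 hy2 hy3 hty
  · exact hG.private_adj_private_of_anticomplete_adj h13 h12
      ht1 ht3 ht2 ha1 ha3 ha2 hy1 hy3 hy2 hty
end

section
/- Let G be a (P5, K5-e)-free graph containing a triangle on vertices v1, v2, v3, with Z (the set of vertices adjacent to all three triangle vertices) nonempty. For i ∈ {1,2,3} let Yi be the set of vertices outside the triangle adjacent to exactly the two triangle vertices other than vi. Then for each i, the vertex set of any connected component of the subgraph induced by Yi that has at least two vertices is anticomplete to Y_{i+1} ∪ Y_{i-1} (indices mod 3). -/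
/-!
A vertex `z ∈ Z` has no neighbour in any `Yⱼ`: otherwise `y ∈ Yⱼ` and `vⱼ` are two nonadjacent
vertices complete to the triangle `z vⱼ₊₁ vⱼ₊₂`, an induced `K₅ - e`. Now let `a a'` be an edge
inside `Yᵢ` and `b ∈ Yⱼ`, `j ≠ i`, a neighbour of `a`. Then `b` is not adjacent to `a'`, since
otherwise `b` and `vⱼ` are nonadjacent and complete to the triangle `a a' vₖ` (`k` the third
index). Hence `a' - a - b - vᵢ - z` is an induced `P₅`.
-/

open SimpleGraph

theorem K5e_adj {a b : Fin 5} :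
    K5e.Adj a b ↔ a ≠ b ∧ ¬(a = 0 ∧ b = 1) ∧ ¬(a = 1 ∧ b = 0) := by
  simp only [K5e, deleteEdges_adj, top_adj, Set.mem_singleton_iff, Sym2.eq_iff]
  tauto

section InducedCopy

variable {V W : Type*} {G : SimpleGraph V} {H : SimpleGraph W}

/-- A map reflecting adjacency can identify only vertices of `H` with the same neighbourhood,
so injectivity needs to be checked on such pairs alone. -/
theorem hasInducedCopy_of_lt [LinearOrder W] (f : W → V)
    (hf : ∀ a b, a < b → (G.Adj (f a) (f b) ↔ H.Adj a b))
    (hinj : ∀ a b, (∀ c, H.Adj a c ↔ H.Adj b c) → f a = f b → a = b) :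
    HasInducedCopy H G := by
  have hadj : ∀ a b, G.Adj (f a) (f b) ↔ H.Adj a b := by
    intro a b
    rcases lt_trichotomy a b with hab | rfl | hab
    · exact hf a b hab
    · simp
    · rw [G.adj_comm, H.adj_comm]; exact hf b a hab
  exact ⟨⟨f, fun a b h => hinj a b (fun c => by rw [← hadj, ← hadj, h]) h⟩, hadj⟩

theorem hasInducedCopy_K5e {x₀ x₁ x₂ x₃ x₄ : V} (h₀₁ : x₀ ≠ x₁) (n₀₁ : ¬G.Adj x₀ x₁)
    (e₀₂ : G.Adj x₀ x₂) (e₀₃ : G.Adj x₀ x₃) (e₀₄ : G.Adj x₀ x₄)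
    (e₁₂ : G.Adj x₁ x₂) (e₁₃ : G.Adj x₁ x₃) (e₁₄ : G.Adj x₁ x₄)
    (e₂₃ : G.Adj x₂ x₃) (e₂₄ : G.Adj x₂ x₄) (e₃₄ : G.Adj x₃ x₄) :
    HasInducedCopy K5e G := by
  refine hasInducedCopy_of_lt ![x₀, x₁, x₂, x₃, x₄] ?_ fun a b htwin hab => ?_
  · intro a b hab
    fin_cases a <;> fin_cases b <;> simp [K5e_adj, *] at hab ⊢
  · have twins : ∀ a b : Fin 5, (∀ c, K5e.Adj a c ↔ K5e.Adj b c) →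
        a = b ∨ a = 0 ∧ b = 1 ∨ a = 1 ∧ b = 0 := by
      simp only [K5e_adj]; decide
    rcases twins a b htwin with rfl | ⟨rfl, rfl⟩ | ⟨rfl, rfl⟩
    · rfl
    · exact absurd hab h₀₁
    · exact absurd hab.symm h₀₁

theorem hasInducedCopy_pathGraph_five_s8 {x₀ x₁ x₂ x₃ x₄ : V}
    (e₀₁ : G.Adj x₀ x₁) (e₁₂ : G.Adj x₁ x₂) (e₂₃ : G.Adj x₂ x₃) (e₃₄ : G.Adj x₃ x₄)
    (n₀₂ : ¬G.Adj x₀ x₂) (n₀₃ : ¬G.Adj x₀ x₃) (n₀₄ : ¬G.Adj x₀ x₄)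
    (n₁₃ : ¬G.Adj x₁ x₃) (n₁₄ : ¬G.Adj x₁ x₄) (n₂₄ : ¬G.Adj x₂ x₄) :
    HasInducedCopy (pathGraph 5) G := by
  refine hasInducedCopy_of_lt ![x₀, x₁, x₂, x₃, x₄] (fun a b hab => ?_) fun a b htwin _ => ?_
  · fin_cases a <;> fin_cases b <;> simp [pathGraph_adj, *] at hab ⊢
  · have twin_free : ∀ a b : Fin 5,
        (∀ c, (pathGraph 5).Adj a c ↔ (pathGraph 5).Adj b c) → a = b := by
      simp only [pathGraph_adj]; decide
    exact twin_free a b htwin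

end InducedCopy

theorem SimpleGraph.ConnectedComponent.exists_adj_of_mem_supp {V : Type*} {G : SimpleGraph V}
    {c : G.ConnectedComponent} (hc : ∃ a ∈ c.supp, ∃ b ∈ c.supp, a ≠ b) {u : V}
    (hu : u ∈ c.supp) : ∃ w, G.Adj u w := by
  obtain ⟨a, ha, b, hb, hab⟩ := hc
  obtain ⟨t, ht, htu⟩ : ∃ t ∈ c.supp, t ≠ u := by
    by_cases hau : a = u
    · exact ⟨b, hb, hau ▸ hab.symm⟩
    · exact ⟨a, ha, hau⟩
  obtain ⟨p⟩ : G.Reachable u t := ConnectedComponent.exact (hu.trans ht.symm)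
  exact ⟨_, p.adj_snd (p.not_nil_of_ne htu.symm)⟩

theorem not_adj_of_isInducedFree_K5e {V : Type*} {G : SimpleGraph V}
    (hK5e : IsInducedFree G K5e) {x y a b c : V} (hxy : x ≠ y) (hnxy : ¬G.Adj x y)
    (hab : G.Adj a b) (hac : G.Adj a c) (hbc : G.Adj b c)
    (hxa : G.Adj x a) (hxb : G.Adj x b) (hxc : G.Adj x c) (hyb : G.Adj y b) (hyc : G.Adj y c) :
    ¬G.Adj y a := fun hya =>
  hK5e (hasInducedCopy_K5e hxy hnxy hxa hxb hxc hya hyb hyc hab hac hbc)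

section Triangle

variable {V : Type*} {G : SimpleGraph V} {v : Fin 3 → V}

def AdjTriangleExcept (G : SimpleGraph V) (v : Fin 3 → V) (i : Fin 3) (u : V) : Prop :=
  (∀ j, u ≠ v j) ∧ ∀ j, (G.Adj u (v j) ↔ j ≠ i)

theorem AdjTriangleExcept.not_adj_of_forall_adj (hK5e : IsInducedFree G K5e)
    (hadj : ∀ i j, i ≠ j → G.Adj (v i) (v j)) {j : Fin 3} {y z : V}
    (hy : AdjTriangleExcept G v j y) (hz : ∀ k, G.Adj z (v k)) : ¬G.Adj y z := by
  have hj : j + 1 ≠ j ∧ j + 2 ≠ j ∧ j + 1 ≠ j + 2 := by fin_cases j <;> decide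
  exact not_adj_of_isInducedFree_K5e hK5e (hy.1 j).symm (fun h => (hy.2 j).1 h.symm rfl)
    (hz _) (hz _) (hadj _ _ hj.2.2) (hz j).symm (hadj _ _ hj.1.symm) (hadj _ _ hj.2.1.symm)
    ((hy.2 _).2 hj.1) ((hy.2 _).2 hj.2.1)

theorem AdjTriangleExcept.not_adj_of_adj (hP5 : IsInducedFree G (pathGraph 5))
    (hK5e : IsInducedFree G K5e) (hadj : ∀ i j, i ≠ j → G.Adj (v i) (v j))
    {i j : Fin 3} (hij : i ≠ j) {z a a' b : V} (hz : ∀ k, G.Adj z (v k))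
    (ha : AdjTriangleExcept G v i a) (ha' : AdjTriangleExcept G v i a') (haa' : G.Adj a a')
    (hb : AdjTriangleExcept G v j b) : ¬G.Adj a b := by
  intro hab
  obtain ⟨k, hki, hkj⟩ : ∃ k, k ≠ i ∧ k ≠ j := by
    have : ∀ i j : Fin 3, i ≠ j → ∃ k, k ≠ i ∧ k ≠ j := by decide
    exact this i j hij
  have hb'a' : ¬G.Adj b a' :=
    not_adj_of_isInducedFree_K5e hK5e (hb.1 j).symm (fun h => (hb.2 j).1 h.symm rfl)
      haa'.symm ((ha'.2 k).2 hki) ((ha.2 k).2 hki) ((ha'.2 j).2 hij.symm).symm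
      ((ha.2 j).2 hij.symm).symm (hadj j k hkj.symm) hab.symm ((hb.2 k).2 hkj)
  exact hP5 (hasInducedCopy_pathGraph_five_s8 haa'.symm hab ((hb.2 i).2 hij) (hz i).symm
    (fun h => hb'a' h.symm) (fun h => (ha'.2 i).1 h rfl)
    (ha'.not_adj_of_forall_adj hK5e hadj hz) (fun h => (ha.2 i).1 h rfl)
    (ha.not_adj_of_forall_adj hK5e hadj hz) (hb.not_adj_of_forall_adj hK5e hadj hz))

end Triangle

theorem stmt_8 {V : Type*} (G : SimpleGraph V)
    (hP5 : IsInducedFree G (pathGraph 5)) (hK5e : IsInducedFree G K5e)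
    (v : Fin 3 → V) (hadj : ∀ i j, i ≠ j → G.Adj (v i) (v j))
    (Y : Fin 3 → Set V) (Z : Set V)
    (hY : ∀ i, Y i = {u | (∀ j, u ≠ v j) ∧ ∀ j, (G.Adj u (v j) ↔ j ≠ i)})
    (hZ : Z = {u | (∀ j, u ≠ v j) ∧ ∀ j, G.Adj u (v j)})
    (hZne : Z.Nonempty) (i : Fin 3)
    (c : (G.induce (Y i)).ConnectedComponent)
    (hbig : ∃ a ∈ c.supp, ∃ b ∈ c.supp, a ≠ b) :
    ∀ a ∈ Subtype.val '' c.supp, ∀ b ∈ Y (i + 1) ∪ Y (i - 1), ¬ G.Adj a b := by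
  obtain ⟨z, -, hz⟩ := hZ ▸ hZne
  have hYmem : ∀ {j u}, u ∈ Y j → AdjTriangleExcept G v j u := fun {j _} hu => by
    rwa [hY j] at hu
  rintro _ ⟨a, ha, rfl⟩ b hb
  obtain ⟨a', haa'⟩ := c.exists_adj_of_mem_supp hbig ha
  obtain ⟨j, hij, hbj⟩ : ∃ j, i ≠ j ∧ b ∈ Y j := by
    have hi : i ≠ i + 1 ∧ i ≠ i - 1 := by fin_cases i <;> decide
    rcases hb with hb | hb
    exacts [⟨_, hi.1, hb⟩, ⟨_, hi.2, hb⟩]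
  exact (hYmem a.2).not_adj_of_adj hP5 hK5e hadj hij hz (hYmem a'.2) haa' (hYmem hbj)
end

section
/- Let G be a (K5-e)-free graph containing a triangle on vertices v1, v2, v3, let Z be the set of vertices adjacent to all three of v1, v2, v3, and let L be the set of vertices with no neighbor in {v1,v2,v3}. Then every vertex of L has at most two neighbors in Z. -/
open SimpleGraph

lemma K5e_adj_s9 (i j : Fin 5) : K5e.Adj i j ↔ i ≠ j ∧ s(i, j) ≠ s(0, 1) := by
  simp [K5e, deleteEdges]
  tauto

/-- building an induced copy from 5 suitable vertices -/
lemma copy_of_five {V : Type*} (G : SimpleGraph V) (x y z w u : V)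
    (hxy : ¬ G.Adj x y)
    (hxz : G.Adj x z) (hxw : G.Adj x w) (hxu : G.Adj x u)
    (hyz : G.Adj y z) (hyw : G.Adj y w) (hyu : G.Adj y u)
    (hzw : G.Adj z w) (hzu : G.Adj z u) (hwu : G.Adj w u)
    (hne : x ≠ y) :
    HasInducedCopy K5e G := by
  have inj : Function.Injective ![x, y, z, w, u] := by
    intro i j h
    fin_cases i <;> fin_cases j <;> simp_all <;>
      first
      | rfl
      | (exact absurd (h ▸ hxz) (G.loopless _))
      | (exact absurd (h ▸ hxw) (G.loopless _))
      | (exact absurd (h ▸ hxu) (G.loopless _))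
      | (exact absurd (h ▸ hyz) (G.loopless _))
      | (exact absurd (h ▸ hyw) (G.loopless _))
      | (exact absurd (h ▸ hyu) (G.loopless _))
      | (exact absurd (h ▸ hzw) (G.loopless _))
      | (exact absurd (h ▸ hzu) (G.loopless _))
      | (exact absurd (h ▸ hwu) (G.loopless _))
      | (exact absurd (h.symm ▸ hxz) (G.loopless _))
      | (exact absurd (h.symm ▸ hxw) (G.loopless _))
      | (exact absurd (h.symm ▸ hxu) (G.loopless _))
      | (exact absurd (h.symm ▸ hyz) (G.loopless _))
      | (exact absurd (h.symm ▸ hyw) (G.loopless _))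
      | (exact absurd (h.symm ▸ hyu) (G.loopless _))
      | (exact absurd (h.symm ▸ hzw) (G.loopless _))
      | (exact absurd (h.symm ▸ hzu) (G.loopless _))
      | (exact absurd (h.symm ▸ hwu) (G.loopless _))
  refine ⟨⟨![x, y, z, w, u], inj⟩, ?_⟩
  intro i j
  fin_cases i <;> fin_cases j <;>
    simp [K5e_adj_s9, hxy, hxz, hxw, hxu, hyz, hyw, hyu, hzw, hzu, hwu,
      hxz.symm, hxw.symm, hxu.symm, hyz.symm, hyw.symm, hyu.symm,
      hzw.symm, hzu.symm, hwu.symm, fun h => hxy (G.adj_symm h)] <;>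
    first
    | decide
    | exact fun h => hxy (G.adj_symm h)

theorem stmt_9 {V : Type*} (G : SimpleGraph V) (hG : IsInducedFree G K5e)
    (v1 v2 v3 : V) (h12 : G.Adj v1 v2) (h13 : G.Adj v1 v3) (h23 : G.Adj v2 v3)
    (Z L : Set V)
    (hZ : Z = {u | u ∉ ({v1, v2, v3} : Set V) ∧ G.Adj u v1 ∧ G.Adj u v2 ∧ G.Adj u v3})
    (hL : L = {u | u ∉ ({v1, v2, v3} : Set V) ∧ ¬ G.Adj u v1 ∧ ¬ G.Adj u v2 ∧ ¬ G.Adj u v3}) :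
    ∀ t ∈ L, ∀ a ∈ Z, ∀ b ∈ Z, ∀ c ∈ Z,
      G.Adj t a → G.Adj t b → G.Adj t c → a = b ∨ a = c ∨ b = c := by
  subst hZ hL
  -- Z ∪ {v1,v2,v3} is a clique
  have hclique : ∀ x ∈ {u | u ∉ ({v1, v2, v3} : Set V) ∧ G.Adj u v1 ∧ G.Adj u v2 ∧ G.Adj u v3},
      ∀ y ∈ {u | u ∉ ({v1, v2, v3} : Set V) ∧ G.Adj u v1 ∧ G.Adj u v2 ∧ G.Adj u v3},
      x ≠ y → G.Adj x y := by
    rintro x ⟨hx0, hx1, hx2, hx3⟩ y ⟨hy0, hy1, hy2, hy3⟩ hne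
    by_contra hadj
    exact hG (copy_of_five G x y v1 v2 v3 hadj hx1 hx2 hx3 hy1 hy2 hy3 h12 h13 h23 hne)
  rintro t ⟨ht0, ht1, ht2, ht3⟩ a ha b hb c hc hta htb htc
  by_contra hcon
  push_neg at hcon
  obtain ⟨hab, hac, hbc⟩ := hcon
  have hGab := hclique a ha b hb hab
  have hGac := hclique a ha c hc hac
  have hGbc := hclique b hb c hc hbc
  obtain ⟨ha0, ha1, ha2, ha3⟩ := ha
  obtain ⟨hb0, hb1, hb2, hb3⟩ := hb
  obtain ⟨hc0, hc1, hc2, hc3⟩ := hc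
  have htv1 : ¬ G.Adj t v1 := ht1
  have hnet : t ≠ v1 := by
    intro h; subst h; exact ht0 (by simp)
  exact hG (copy_of_five G t v1 a b c htv1 hta htb htc ha1.symm hb1.symm hc1.symm hGab hGac hGbc hnet)
end

section
/- Let G be a connected (P5, K5-e)-free graph and let t ≥ 1. Suppose ω(G) ≥ t+3 and G contains no induced copy of H_t, where H_t is the graph obtained from K_{t+3} by adding a new vertex adjacent to exactly two vertices of the K_{t+3}. Then either G is the complement of a bipartite graph or G has a clique cut-set. -/
open SimpleGraph

/-- `Hgraph t` is the graph obtained from `K_{t+3}` (on the first `t+3` vertices) by adding a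
new vertex (the last one) adjacent to exactly two vertices of the `K_{t+3}`. -/
def Hgraph (t : ℕ) : SimpleGraph (Fin (t + 4)) :=
  SimpleGraph.fromRel (fun a b =>
    (a.val < t + 3 ∧ b.val < t + 3) ∨ (a.val = t + 3 ∧ b.val < 2))

/-- `G` is the complement of a bipartite graph: its vertex set can be partitioned into two
(possibly empty) cliques. -/
def IsCompBipartite {V : Type*} (G : SimpleGraph V) : Prop :=
  ∃ A B : Set V, A ∪ B = Set.univ ∧ G.IsClique A ∧ G.IsClique B

/-- `G` has a clique cut-set: a clique whose removal disconnects the graph. -/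
def HasCliqueCutset {V : Type*} (G : SimpleGraph V) : Prop :=
  ∃ K A B : Set V, G.IsClique K ∧ A.Nonempty ∧ B.Nonempty ∧
    Disjoint A B ∧ Disjoint K A ∧ Disjoint K B ∧ K ∪ A ∪ B = Set.univ ∧
    ∀ a ∈ A, ∀ b ∈ B, ¬ G.Adj a b

/-!
Fix a maximum clique `M`, so `|M| ≥ t + 3 ≥ 4`. A vertex outside `M` with three neighbours in `M`
spans a `K5 - e` together with a non-neighbour in `M`, and one with exactly two spans an `H_t`;
so every vertex outside `M` has at most one neighbour in `M`. If some component `C` of `G - M`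
misses a vertex of `M`, the neighbours of `C` in `M` form a clique cut-set. Otherwise `P5`-freeness,
applied to induced paths `a - b - c - y` with `y ∈ M`, shows that every vertex of `G - M` is joined
to each vertex of `M` by a path of length at most two through `G - M`, that it has a neighbour in
`M` (or `M` would not be maximum), and that `G - M` has no induced `P3` (the last case yields a
`K5 - e`). So the components of `G - M` are cliques, and two of them would span an induced `P5`
through `M`: `V \ M` is a clique.
-/

namespace SimpleGraph

variable {V : Type*} {G : SimpleGraph V}

theorem hasInducedCopy_of_adj_iff {W : Type*} {H : SimpleGraph W}
    (hH : ∀ a b, (∀ c, H.Adj a c ↔ H.Adj b c) → a = b) (f : W → V)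
    (hf : ∀ a b, G.Adj (f a) (f b) ↔ H.Adj a b) : HasInducedCopy H G :=
  ⟨⟨f, fun a b hab => hH a b fun c => by rw [← hf, ← hf, hab]⟩, hf⟩

theorem not_isInducedPath5 (hP5 : IsInducedFree G (pathGraph 5)) {a b c d e : V}
    (hab : G.Adj a b) (hbc : G.Adj b c) (hcd : G.Adj c d) (hde : G.Adj d e)
    (hac : ¬G.Adj a c) (had : ¬G.Adj a d) (hae : ¬G.Adj a e)
    (hbd : ¬G.Adj b d) (hbe : ¬G.Adj b e) (hce : ¬G.Adj c e) : False := by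
  refine hP5 (hasInducedCopy_of_adj_iff (by simp only [pathGraph_adj]; decide)
    ![a, b, c, d, e] fun i j => ?_)
  fin_cases i <;> fin_cases j <;>
    simp [pathGraph_adj, hab, hbc, hcd, hde, hac, had, hae, hbd, hbe, hce, G.adj_comm]

theorem not_isInducedK5e (hK5e : IsInducedFree G K5e) {a b c d e : V} (hab : a ≠ b)
    (hnab : ¬G.Adj a b) (hac : G.Adj a c) (had : G.Adj a d) (hae : G.Adj a e)
    (hbc : G.Adj b c) (hbd : G.Adj b d) (hbe : G.Adj b e)
    (hcd : G.Adj c d) (hce : G.Adj c e) (hde : G.Adj d e) : False := by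
  have hf : ∀ i j, G.Adj (![a, b, c, d, e] i) (![a, b, c, d, e] j) ↔ K5e.Adj i j := by
    intro i j
    fin_cases i <;> fin_cases j <;>
      simp [K5e, hnab, hac, had, hae, hbc, hbd, hbe, hcd, hce, hde, G.adj_comm]
  refine hK5e ⟨⟨![a, b, c, d, e], fun i j hij => ?_⟩, hf⟩
  fin_cases i <;> fin_cases j <;>
    simp_all [hac.ne, had.ne, hae.ne, hbc.ne, hbd.ne, hbe.ne, hcd.ne, hce.ne, hde.ne]

@[simp] theorem hgraph_adj_castSucc_castSucc {t : ℕ} {i j : Fin (t + 3)} :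
    (Hgraph t).Adj i.castSucc j.castSucc ↔ i ≠ j := by
  simp [Hgraph, Fin.ext_iff]

@[simp] theorem hgraph_adj_last_castSucc {t : ℕ} {j : Fin (t + 3)} :
    (Hgraph t).Adj (Fin.last _) j.castSucc ↔ j.val < 2 := by
  simp [Hgraph, Fin.ext_iff]; omega

theorem hasInducedCopy_hgraph {t : ℕ} {e : Fin (t + 3) → V} (he : Function.Injective e)
    (hcl : ∀ i j, i ≠ j → G.Adj (e i) (e j)) {v : V} (hv : v ∉ Set.range e)
    (hve : ∀ j, G.Adj v (e j) ↔ j.val < 2) : HasInducedCopy (Hgraph t) G := by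
  have hf : ∀ i j, G.Adj (Fin.lastCases v e i) (Fin.lastCases v e j) ↔ (Hgraph t).Adj i j := by
    intro i j
    induction i using Fin.lastCases <;> induction j using Fin.lastCases <;>
      simp [hve, G.adj_comm _ v, (Hgraph t).adj_comm _ (Fin.last _)]
    exact ⟨fun h hij => h.ne (congrArg e hij), hcl _ _⟩
  refine ⟨⟨fun i => Fin.lastCases v e i, fun i j hij => ?_⟩, hf⟩
  induction i using Fin.lastCases <;> induction j using Fin.lastCases <;>
    simp only [Fin.lastCases_last, Fin.lastCases_castSucc] at hij
  · rfl
  · exact (hv ⟨_, hij.symm⟩).elim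
  · exact (hv ⟨_, hij⟩).elim
  · rw [he hij]

theorem hasInducedCopy_hgraph_of_isClique {t : ℕ} {K : Finset V} (hK : G.IsClique (K : Set V))
    (hcard : t + 3 ≤ K.card) {v x y : V} (hv : v ∉ K) (hx : x ∈ K) (hy : y ∈ K) (hxy : x ≠ y)
    (hvK : ∀ c ∈ K, G.Adj v c ↔ c = x ∨ c = y) : HasInducedCopy (Hgraph t) G := by
  classical
  obtain ⟨g⟩ : Nonempty (Fin (t + 1) ↪ ((K.erase x).erase y : Finset V)) := by
    refine Function.Embedding.nonempty_of_card_le ?_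
    rw [Fintype.card_fin, Fintype.card_coe,
      Finset.card_erase_of_mem (Finset.mem_erase.2 ⟨hxy.symm, hy⟩), Finset.card_erase_of_mem hx]
    omega
  have hg (i : Fin (t + 1)) : (g i : V) ∈ K ∧ (g i : V) ≠ x ∧ (g i : V) ≠ y := by
    have := (g i).2; simp only [Finset.mem_erase] at this; tauto
  set e : Fin (t + 3) → V := Fin.cons x (Fin.cons y fun i => (g i : V))
  have heK (i : Fin (t + 3)) : e i ∈ K := by
    induction i using Fin.cases with
    | zero => exact hx
    | succ i => induction i using Fin.cases with
      | zero => exact hy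
      | succ i => exact (hg i).1
  have he : Function.Injective e := by
    refine Fin.cons_injective_iff.2 ⟨?_, Fin.cons_injective_iff.2 ⟨?_, ?_⟩⟩
    · rintro ⟨i, hi⟩
      induction i using Fin.cases with
      | zero => exact hxy hi.symm
      | succ i => exact (hg i).2.1 hi
    · rintro ⟨i, hi⟩; exact (hg i).2.2 hi
    · exact fun i j hij => g.injective (Subtype.ext hij)
  refine hasInducedCopy_hgraph (v := v) he (fun i j hij => hK (heK i) (heK j) (he.ne hij))
    (by rintro ⟨i, rfl⟩; exact hv (heK i)) fun j => ?_
  rw [hvK _ (heK j)]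
  induction j using Fin.cases with
  | zero => simp [e]
  | succ j => induction j using Fin.cases with
    | zero => simp [e]
    | succ j => simp [e, hg]

variable {M : Finset V}

theorem IsMaximumClique.exists_not_adj [Finite V] (hM : G.IsMaximumClique M) {v : V}
    (hv : v ∉ M) : ∃ d ∈ M, ¬G.Adj v d := by
  classical
  by_contra! hall
  have hcl : G.IsClique (insert v M : Finset V) := by
    rw [Finset.coe_insert]
    exact hM.isClique.insert fun d hd _ => hall d hd
  have := hM.maximum _ hcl
  rw [Finset.card_insert_of_notMem hv] at this
  omega

theorem IsMaximumClique.eq_of_adj_of_adj [Finite V] (hK5e : IsInducedFree G K5e) {t : ℕ}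
    (hHt : IsInducedFree G (Hgraph t)) (hM : G.IsMaximumClique M) (ht : t + 3 ≤ M.card)
    {v x y : V} (hv : v ∉ M) (hx : x ∈ M) (hy : y ∈ M) (hvx : G.Adj v x) (hvy : G.Adj v y) :
    x = y := by
  by_contra hxy
  obtain ⟨d, hd, hvd⟩ := hM.exists_not_adj hv
  have hMadj {a b : V} (ha : a ∈ M) (hb : b ∈ M) (hab : a ≠ b) : G.Adj a b := hM.isClique ha hb hab
  have hdM {a : V} (ha : a ∈ M) (hva : G.Adj v a) : G.Adj d a :=
    hMadj hd ha fun h => hvd (h ▸ hva)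
  by_cases hthird : ∃ c ∈ M, c ≠ x ∧ c ≠ y ∧ G.Adj v c
  · obtain ⟨c, hc, hcx, hcy, hvc⟩ := hthird
    exact not_isInducedK5e hK5e (by rintro rfl; exact hv hd) hvd hvx hvy hvc (hdM hx hvx) (hdM hy hvy)
      (hdM hc hvc) (hMadj hx hy hxy) (hMadj hx hc hcx.symm) (hMadj hy hc hcy.symm)
  · push Not at hthird
    refine hHt (hasInducedCopy_hgraph_of_isClique hM.isClique ht hv hx hy hxy fun c hc => ?_)
    refine ⟨fun hvc => ?_, by rintro (rfl | rfl) <;> assumption⟩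
    by_contra! hcxy
    exact hthird c hc hcxy.1 hcxy.2 hvc

def AtMostOneNeighborIn (G : SimpleGraph V) (M : Finset V) : Prop :=
  ∀ v ∉ M, ∀ x ∈ M, ∀ y ∈ M, G.Adj v x → G.Adj v y → x = y

theorem AtMostOneNeighborIn.not_adj (hM1 : G.AtMostOneNeighborIn M) {r x y : V} (hr : r ∉ M)
    (hx : x ∈ M) (hrx : G.Adj r x) (hy : y ∈ M) (hyx : y ≠ x) : ¬G.Adj r y :=
  fun hry => hyx (hM1 r hr y hy x hx hry hrx)

theorem AtMostOneNeighborIn.exists_mem_ne_not_adj (hM1 : G.AtMostOneNeighborIn M)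
    (hM4 : 4 ≤ M.card) {p q : V} (hp : p ∉ M) (hq : q ∉ M) (y : V) :
    ∃ z ∈ M, z ≠ y ∧ ¬G.Adj p z ∧ ¬G.Adj q z := by
  classical
  have hnbr {r : V} (hr : r ∉ M) : (M.filter (G.Adj r)).card ≤ 1 :=
    Finset.card_le_one.2 fun a ha b hb => by
      simp only [Finset.mem_filter] at ha hb
      exact hM1 r hr a ha.1 b hb.1 ha.2 hb.2
  have hlt : (insert y (M.filter (G.Adj p) ∪ M.filter (G.Adj q))).card < M.card :=
    calc _ ≤ (M.filter (G.Adj p) ∪ M.filter (G.Adj q)).card + 1 := Finset.card_insert_le _ _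
      _ ≤ (M.filter (G.Adj p)).card + (M.filter (G.Adj q)).card + 1 := by
          gcongr; exact Finset.card_union_le _ _
      _ < M.card := by linarith [hnbr hp, hnbr hq]
  obtain ⟨z, hz, hzF⟩ := Finset.exists_mem_notMem_of_card_lt_card hlt
  simp only [Finset.mem_insert, Finset.mem_union, Finset.mem_filter, not_or, not_and] at hzF
  exact ⟨z, hz, hzF.1, hzF.2.1 hz, hzF.2.2 hz⟩

/-- `G - M`, kept on all of `V`: the vertices of `M` become isolated. -/
def outside (G : SimpleGraph V) (M : Finset V) : SimpleGraph V where
  Adj a b := G.Adj a b ∧ a ∉ M ∧ b ∉ M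
  symm := ⟨fun _ _ h => ⟨h.1.symm, h.2.2, h.2.1⟩⟩
  loopless := ⟨fun _ h => G.irrefl h.1⟩

theorem outside_adj {a b : V} : (G.outside M).Adj a b ↔ G.Adj a b ∧ a ∉ M ∧ b ∉ M := Iff.rfl

theorem adj_of_path_to_clique (hP5 : IsInducedFree G (pathGraph 5))
    (hMcl : G.IsClique (M : Set V)) (hM1 : G.AtMostOneNeighborIn M) (hM4 : 4 ≤ M.card)
    {a b c y : V} (hab : (G.outside M).Adj a b) (hbc : (G.outside M).Adj b c) (hcy : G.Adj c y)
    (hy : y ∈ M) (hay : ¬G.Adj a y) (hby : ¬G.Adj b y) : G.Adj a c := by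
  obtain ⟨hab, ha, hb⟩ := outside_adj.1 hab
  obtain ⟨hbc, -, hc⟩ := outside_adj.1 hbc
  by_contra hac
  obtain ⟨z, hz, hzy, haz, hbz⟩ := hM1.exists_mem_ne_not_adj hM4 ha hb y
  exact not_isInducedPath5 hP5 hab hbc hcy (hMcl hy hz hzy.symm) hac hay haz hby hbz
    fun hcz => hzy (hM1 c hc z hz y hy hcz hcy)

theorem exists_outside_adj_adj_of_reachable (hP5 : IsInducedFree G (pathGraph 5))
    (hMcl : G.IsClique (M : Set V)) (hM1 : G.AtMostOneNeighborIn M) (hM4 : 4 ≤ M.card)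
    {q w y : V} (hy : y ∈ M) (hqy : ¬G.Adj q y) (hqw : (G.outside M).Reachable q w)
    (hwy : G.Adj w y) : ∃ u, (G.outside M).Adj q u ∧ G.Adj u y := by
  obtain ⟨p⟩ := hqw
  induction p with
  | nil => exact absurd hwy hqy
  | @cons q s w hqs p ih =>
    by_cases hsy : G.Adj s y
    · exact ⟨s, hqs, hsy⟩
    obtain ⟨u, hsu, huy⟩ := ih hsy hwy
    have hqu := adj_of_path_to_clique hP5 hMcl hM1 hM4 hqs hsu huy hy hqy hsy
    exact ⟨u, outside_adj.2 ⟨hqu, (outside_adj.1 hqs).2.1, (outside_adj.1 hsu).2.2⟩, huy⟩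

theorem IsMaximumClique.exists_adj_of_outside [Finite V] (hP5 : IsInducedFree G (pathGraph 5))
    (hM : G.IsMaximumClique M) (hM1 : G.AtMostOneNeighborIn M) (hM4 : 4 ≤ M.card)
    (hnear : ∀ p ∉ M, ∀ y ∈ M, ¬G.Adj p y → ∃ u, (G.outside M).Adj p u ∧ G.Adj u y)
    {p : V} (hp : p ∉ M) : ∃ x ∈ M, G.Adj p x := by
  classical
  by_contra! hnone
  choose! u hpu huy using fun y hy => hnear p hp y hy (hnone y hy)
  have huM {y : V} (hy : y ∈ M) : u y ∉ M := (outside_adj.1 (hpu y hy)).2.2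
  have hinj : Set.InjOn u M := fun y hy y' hy' h =>
    hM1 _ (huM hy) y hy y' hy' (huy y hy) (h ▸ huy y' hy')
  -- the `u y` together with `p` would form a clique larger than `M`
  have hcl : G.IsClique (insert p (M.image u) : Finset V) := by
    rw [Finset.coe_insert, Finset.coe_image]
    refine IsClique.insert ?_ ?_
    · rintro _ ⟨y, hy, rfl⟩ _ ⟨y', hy', rfl⟩ hne
      exact adj_of_path_to_clique hP5 hM.isClique hM1 hM4 (hpu y hy).symm (hpu y' hy')
        (huy y' hy') hy' (fun h => hne (congrArg u (hM1 _ (huM hy) y hy y' hy' (huy y hy) h)))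
        (hnone y' hy')
    · rintro _ ⟨y, hy, rfl⟩ -
      exact (outside_adj.1 (hpu y hy)).1
  have hp' : p ∉ M.image u := by
    simp only [Finset.mem_image, not_exists, not_and]
    exact fun y hy hyp => G.irrefl (hyp ▸ (outside_adj.1 (hpu y hy)).1)
  have := hM.maximum _ hcl
  rw [Finset.card_insert_of_notMem hp', Finset.card_image_of_injOn hinj] at this
  omega

theorem IsMaximumClique.adj_of_outside_adj_adj [Finite V] (hP5 : IsInducedFree G (pathGraph 5))
    (hK5e : IsInducedFree G K5e) (hM : G.IsMaximumClique M) (hM1 : G.AtMostOneNeighborIn M)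
    (hM4 : 4 ≤ M.card)
    (hnear : ∀ p ∉ M, ∀ y ∈ M, ¬G.Adj p y → ∃ u, (G.outside M).Adj p u ∧ G.Adj u y)
    {a q b : V} (haq : (G.outside M).Adj a q) (hqb : (G.outside M).Adj q b) (hab : a ≠ b) :
    G.Adj a b := by
  classical
  by_contra hnab
  obtain ⟨haq', ha, hq⟩ := outside_adj.1 haq
  obtain ⟨hqb', -, hb⟩ := outside_adj.1 hqb
  have hpath := @adj_of_path_to_clique _ _ _ hP5 hM.isClique hM1 hM4
  obtain ⟨xa, hxa, haxa⟩ := hM.exists_adj_of_outside hP5 hM1 hM4 hnear ha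
  obtain ⟨xb, hxb, hbxb⟩ := hM.exists_adj_of_outside hP5 hM1 hM4 hnear hb
  obtain ⟨xq, hxq, hqxq⟩ := hM.exists_adj_of_outside hP5 hM1 hM4 hnear hq
  by_cases hxa_priv : xa ≠ xb ∧ xa ≠ xq
  · exact hnab (hpath hqb.symm haq.symm haxa hxa (hM1.not_adj hb hxb hbxb hxa hxa_priv.1)
      (hM1.not_adj hq hxq hqxq hxa hxa_priv.2)).symm
  by_cases hxb_priv : xb ≠ xa ∧ xb ≠ xq
  · exact hnab (hpath haq hqb hbxb hxb (hM1.not_adj ha hxa haxa hxb hxb_priv.1)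
      (hM1.not_adj hq hxq hqxq hxb hxb_priv.2))
  obtain rfl : xa = xb := by grind
  -- now `a` and `b` are attached to the same vertex; two further vertices of `M` give a `K5 - e`
  set N := (M.erase xa).erase xq
  obtain ⟨y₁, hy₁, y₂, hy₂, hy₁₂⟩ : ∃ y₁ ∈ N, ∃ y₂ ∈ N, y₁ ≠ y₂ := by
    refine Finset.one_lt_card.1 ?_
    have := Finset.pred_card_le_card_erase (s := M) (a := xa)
    have : (M.erase xa).card - 1 ≤ N.card := Finset.pred_card_le_card_erase
    omega
  have hNM {y : V} (hy : y ∈ N) : y ∈ M := Finset.mem_of_mem_erase (Finset.mem_of_mem_erase hy)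
  have hqN {y : V} (hy : y ∈ N) : ¬G.Adj q y :=
    hM1.not_adj hq hxq hqxq (hNM hy) (Finset.ne_of_mem_erase hy)
  have hcN {c y : V} (hc : c ∉ M) (hcx : G.Adj c xa) (hy : y ∈ N) : ¬G.Adj c y :=
    hM1.not_adj hc hxa hcx (hNM hy) (Finset.ne_of_mem_erase (Finset.mem_of_mem_erase hy))
  obtain ⟨u₁, hqu₁, hu₁y₁⟩ := hnear q hq y₁ (hNM hy₁) (hqN hy₁)
  obtain ⟨u₂, hqu₂, hu₂y₂⟩ := hnear q hq y₂ (hNM hy₂) (hqN hy₂)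
  have hcu {c u y : V} (hcq : (G.outside M).Adj c q) (hc : c ∉ M) (hcx : G.Adj c xa)
      (hqu : (G.outside M).Adj q u) (huy : G.Adj u y) (hy : y ∈ N) : G.Adj c u :=
    hpath hcq hqu huy (hNM hy) (hcN hc hcx hy) (hqN hy)
  have hu₁₂ : G.Adj u₁ u₂ := hpath hqu₁.symm hqu₂ hu₂y₂ (hNM hy₂)
    (hM1.not_adj (outside_adj.1 hqu₁).2.2 (hNM hy₁) hu₁y₁ (hNM hy₂) hy₁₂.symm) (hqN hy₂)
  exact not_isInducedK5e hK5e hab hnab haq' (hcu haq ha haxa hqu₁ hu₁y₁ hy₁)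
    (hcu haq ha haxa hqu₂ hu₂y₂ hy₂) hqb'.symm (hcu hqb.symm hb hbxb hqu₁ hu₁y₁ hy₁)
    (hcu hqb.symm hb hbxb hqu₂ hu₂y₂ hy₂) (outside_adj.1 hqu₁).1 (outside_adj.1 hqu₂).1 hu₁₂

theorem IsMaximumClique.adj_of_outside_reachable [Finite V]
    (hP5 : IsInducedFree G (pathGraph 5)) (hK5e : IsInducedFree G K5e)
    (hM : G.IsMaximumClique M) (hM1 : G.AtMostOneNeighborIn M) (hM4 : 4 ≤ M.card)
    (hnear : ∀ p ∉ M, ∀ y ∈ M, ¬G.Adj p y → ∃ u, (G.outside M).Adj p u ∧ G.Adj u y)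
    {u v : V} (huv : (G.outside M).Reachable u v) (hv : v ∉ M) (hne : u ≠ v) : G.Adj u v := by
  obtain ⟨p⟩ := huv
  induction p with
  | nil => exact absurd rfl hne
  | @cons u s v hus p ih =>
    obtain ⟨hus', -, hs⟩ := outside_adj.1 hus
    by_cases hsv : s = v
    · exact hsv ▸ hus'
    exact hM.adj_of_outside_adj_adj hP5 hK5e hM1 hM4 hnear hus
      (outside_adj.2 ⟨ih hv hsv, hs, hv⟩) hne

theorem IsMaximumClique.isClique_compl [Finite V]
    (hP5 : IsInducedFree G (pathGraph 5)) (hK5e : IsInducedFree G K5e)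
    (hM : G.IsMaximumClique M) (hM1 : G.AtMostOneNeighborIn M) (hM4 : 4 ≤ M.card)
    (hfull : ∀ q ∉ M, ∀ x ∈ M, ∃ w ∉ M, (G.outside M).Reachable q w ∧ G.Adj w x) :
    G.IsClique (M : Set V)ᶜ := by
  have hnear : ∀ p ∉ M, ∀ y ∈ M, ¬G.Adj p y → ∃ u, (G.outside M).Adj p u ∧ G.Adj u y :=
    fun p hp y hy hpy =>
      let ⟨_, _, hpw, hwy⟩ := hfull p hp y hy
      exists_outside_adj_adj_of_reachable hP5 hM.isClique hM1 hM4 hy hpy hpw hwy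
  have hcomp := @hM.adj_of_outside_reachable _ _ _ _ hP5 hK5e hM1 hM4 hnear
  obtain ⟨x₁, hx₁, x₂, hx₂, hx₁₂⟩ := Finset.one_lt_card.1 (by omega : 1 < M.card)
  have hedge : ∀ u ∉ M, ∃ w v, w ∉ M ∧ v ∉ M ∧ (G.outside M).Reachable u w ∧
      (G.outside M).Reachable u v ∧ G.Adj v w ∧ G.Adj w x₁ ∧ ¬G.Adj v x₁ := by
    intro u hu
    obtain ⟨w, hw, huw, hwx⟩ := hfull u hu x₁ hx₁
    obtain ⟨v, hv, huv, hvx⟩ := hfull u hu x₂ hx₂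
    have hvx₁ : ¬G.Adj v x₁ := hM1.not_adj hv hx₂ hvx hx₁ hx₁₂
    exact ⟨w, v, hw, hv, huw, huv, hcomp (huv.symm.trans huw) hw (by rintro rfl; exact hvx₁ hwx),
      hwx, hvx₁⟩
  intro u hu u' hu' huu'
  by_contra hnadj
  have hcross {s s' : V} (hs : (G.outside M).Reachable u s) (hs' : (G.outside M).Reachable u' s')
      (hsM : s ∉ M) (hs'M : s' ∉ M) : ¬G.Adj s s' := fun h =>
    hnadj (hcomp (hs.trans ((outside_adj.2 ⟨h, hsM, hs'M⟩).reachable.trans hs'.symm)) hu' huu')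
  -- the path `v w x₁ w' v'` runs through two different components of `G - M`
  obtain ⟨w, v, hw, hv, huw, huv, hvw, hwx, hvx⟩ := hedge u hu
  obtain ⟨w', v', hw', hv', huw', huv', hvw', hwx', hvx'⟩ := hedge u' hu'
  exact not_isInducedPath5 hP5 hvw hwx hwx'.symm hvw'.symm hvx (hcross huv huw' hv hw')
    (hcross huv huv' hv hv') (hcross huw huw' hw hw') (hcross huw huv' hw hv')
    fun h => hvx' h.symm

theorem hasCliqueCutset_of_isClique {M A : Set V} (hM : G.IsClique M) (hA : A.Nonempty)
    (hAM : Disjoint A M) (hclosed : ∀ a ∈ A, ∀ b ∉ M, G.Adj a b → b ∈ A) {x : V} (hx : x ∈ M)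
    (hxA : ∀ a ∈ A, ¬G.Adj a x) : HasCliqueCutset G := by
  set K := {z ∈ M | ∃ a ∈ A, G.Adj a z}
  have hKM : K ⊆ M := fun z hz => hz.1
  refine ⟨K, A, (K ∪ A)ᶜ, hM.subset hKM, hA, ⟨x, ?_⟩,
    Set.disjoint_compl_right_iff_subset.2 Set.subset_union_right, hAM.symm.mono_left hKM,
    Set.disjoint_compl_right_iff_subset.2 Set.subset_union_left, Set.union_compl_self _, ?_⟩
  · rintro (⟨-, a, ha, hax⟩ | hxA')
    · exact hxA a ha hax
    · exact hAM.notMem_of_mem_left hxA' hx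
  · intro a ha b hb hab
    simp only [Set.mem_compl_iff, Set.mem_union, not_or] at hb
    by_cases hbM : b ∈ M
    · exact hb.1 ⟨hbM, a, ha, hab⟩
    · exact hb.2 (hclosed a ha b hbM hab)

end SimpleGraph

theorem stmt_11_general {V : Type*} [Fintype V] (G : SimpleGraph V)
    (hP5 : IsInducedFree G (pathGraph 5)) (hK5e : IsInducedFree G K5e)
    (t : ℕ) (ht : 1 ≤ t) (hω : t + 3 ≤ G.cliqueNum)
    (hHt : IsInducedFree G (Hgraph t)) :
    IsCompBipartite G ∨ HasCliqueCutset G := by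
  obtain ⟨M, hM⟩ := G.maximumClique_exists
  rw [← G.maximumClique_card_eq_cliqueNum M hM] at hω
  have hM1 : G.AtMostOneNeighborIn M := fun v hv x hx y hy =>
    hM.eq_of_adj_of_adj hK5e hHt hω hv hx hy
  by_cases hfull : ∀ q ∉ M, ∀ x ∈ M, ∃ w ∉ M, (G.outside M).Reachable q w ∧ G.Adj w x
  · exact Or.inl ⟨M, (M : Set V)ᶜ, Set.union_compl_self _, hM.isClique,
      hM.isClique_compl hP5 hK5e hM1 (by omega) hfull⟩
  · push Not at hfull
    obtain ⟨q, hq, x, hx, hqx⟩ := hfull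
    refine Or.inr (hasCliqueCutset_of_isClique (A := {w | w ∉ M ∧ (G.outside M).Reachable q w})
      hM.isClique ⟨q, hq, .rfl⟩ ?_ ?_ hx fun w hw => hqx w hw.1 hw.2)
    · exact Set.disjoint_left.2 fun w hw => hw.1
    · exact fun w hw b hb hwb => ⟨hb, hw.2.trans (outside_adj.2 ⟨hwb, hw.1, hb⟩).reachable⟩

theorem stmt_11 {V : Type*} [Fintype V] (G : SimpleGraph V) (hconn : G.Connected)
    (hP5 : IsInducedFree G (pathGraph 5)) (hK5e : IsInducedFree G K5e)
    (t : ℕ) (ht : 1 ≤ t) (hω : t + 3 ≤ G.cliqueNum)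
    (hHt : IsInducedFree G (Hgraph t)) :
    IsCompBipartite G ∨ HasCliqueCutset G :=
  stmt_11_general G hP5 hK5e t ht hω hHt
end

section
/- Let G be a connected (P5, K5-e)-free graph with ω(G) ≥ 7. Then either G is the complement of a bipartite graph or G has a clique cut-set. -/
open SimpleGraph

section aux
variable {V : Type*} {G : SimpleGraph V}

lemma p5free_aux (hP5 : IsInducedFree G (pathGraph 5)) (v0 v1 v2 v3 v4 : V)
    (h01 : G.Adj v0 v1) (h12 : G.Adj v1 v2) (h23 : G.Adj v2 v3) (h34 : G.Adj v3 v4)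
    (n02 : ¬ G.Adj v0 v2) (n03 : ¬ G.Adj v0 v3) (n04 : ¬ G.Adj v0 v4)
    (n13 : ¬ G.Adj v1 v3) (n14 : ¬ G.Adj v1 v4) (n24 : ¬ G.Adj v2 v4) : False := by
  have ne02 : v0 ≠ v2 := fun h => n03 (h ▸ h23)
  have ne03 : v0 ≠ v3 := fun h => n04 (h ▸ h34)
  have ne04 : v0 ≠ v4 := fun h => n03 (h ▸ h34.symm)
  have ne13 : v1 ≠ v3 := fun h => n14 (h ▸ h34)
  have ne14 : v1 ≠ v4 := fun h => n24 (h ▸ h12.symm)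
  have ne24 : v2 ≠ v4 := fun h => n14 (h ▸ h12)
  have ne01 := h01.ne
  have ne12 := h12.ne
  have ne23 := h23.ne
  have ne34 := h34.ne
  have hinj : Function.Injective (![v0, v1, v2, v3, v4]) := by
    intro i j hij
    fin_cases i <;> fin_cases j <;> simp_all
  refine hP5 ⟨⟨![v0, v1, v2, v3, v4], hinj⟩, ?_⟩
  intro a b
  have s01 := h01.symm; have s12 := h12.symm; have s23 := h23.symm; have s34 := h34.symm
  have m02 : ¬ G.Adj v2 v0 := fun h => n02 h.symm
  have m03 : ¬ G.Adj v3 v0 := fun h => n03 h.symm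
  have m04 : ¬ G.Adj v4 v0 := fun h => n04 h.symm
  have m13 : ¬ G.Adj v3 v1 := fun h => n13 h.symm
  have m14 : ¬ G.Adj v4 v1 := fun h => n14 h.symm
  have m24 : ¬ G.Adj v4 v2 := fun h => n24 h.symm
  fin_cases a <;> fin_cases b <;>
    simp +decide [pathGraph_adj, G.irrefl] <;> assumption

lemma k5e_aux (hK5e : IsInducedFree G K5e) (u v a b c : V)
    (huv : ¬ G.Adj u v) (hne : u ≠ v)
    (hab : G.Adj a b) (hac : G.Adj a c) (hbc : G.Adj b c)
    (hau : G.Adj a u) (hbu : G.Adj b u) (hcu : G.Adj c u)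
    (hav : G.Adj a v) (hbv : G.Adj b v) (hcv : G.Adj c v) : False := by
  have hinj : Function.Injective (![u, v, a, b, c]) := by
    have := hab.ne; have := hac.ne; have := hbc.ne
    have := hau.ne; have := hbu.ne; have := hcu.ne
    have := hav.ne; have := hbv.ne; have := hcv.ne
    intro i j hij
    fin_cases i <;> fin_cases j <;> simp_all
  refine hK5e ⟨⟨![u, v, a, b, c], hinj⟩, ?_⟩
  intro i j
  have s1 := hab.symm; have s2 := hac.symm; have s3 := hbc.symm
  have s4 := hau.symm; have s5 := hbu.symm; have s6 := hcu.symm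
  have s7 := hav.symm; have s8 := hbv.symm; have s9 := hcv.symm
  have hvu : ¬ G.Adj v u := fun h => huv h.symm
  fin_cases i <;> fin_cases j <;>
    simp +decide [K5e, G.irrefl] <;> assumption

end aux

theorem stmt_12 {V : Type*} [Fintype V] (G : SimpleGraph V) (hconn : G.Connected)
    (hP5 : IsInducedFree G (pathGraph 5)) (hK5e : IsInducedFree G K5e)
    (hω : 7 ≤ G.cliqueNum) :
    IsCompBipartite G ∨ HasCliqueCutset G := by
  classical
  obtain ⟨K, hKc⟩ := G.exists_isNClique_cliqueNum
  have hcl : G.IsClique (↑K : Set V) := hKc.1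
  have hK7 : 7 ≤ K.card := by rw [hKc.2]; exact hω
  set S : V → Finset V := fun v => K.filter (fun k => G.Adj v k) with hS
  have hSmem : ∀ {k v : V}, k ∈ S v ↔ k ∈ K ∧ G.Adj v k := by
    intro k v; simp [hS]
  set D : Set V := {v | v ∉ K} with hD
  have hmaxK : ∀ v, v ∉ K → ∃ u ∈ K, ¬ G.Adj v u := by
    intro v hv
    by_contra hco
    push_neg at hco
    have h2 : G.IsNClique (G.cliqueNum + 1) (insert v K) := hKc.insert hco
    have h3 : (insert v K).card ≤ G.cliqueNum :=
      IsClique.card_le_cliqueNum (tc := h2.1)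
    rw [h2.2] at h3
    omega
  have L1 : ∀ v ∈ D, (S v).card ≤ 2 := by
    intro v hv
    by_contra hgt
    push_neg at hgt
    rw [Finset.two_lt_card] at hgt
    obtain ⟨a, ha, b, hb, c, hc, hab, hac, hbc⟩ := hgt
    rw [hSmem] at ha hb hc
    obtain ⟨u, hu, huv⟩ := hmaxK v hv
    have hneau : a ≠ u := fun h => huv (h ▸ ha.2)
    have hnebu : b ≠ u := fun h => huv (h ▸ hb.2)
    have hnecu : c ≠ u := fun h => huv (h ▸ hc.2)
    have hv' : v ∉ K := hv
    exact k5e_aux hK5e u v a b c (fun h => huv h.symm) (fun h => hv' (h ▸ hu))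
      (hcl ha.1 hb.1 hab) (hcl ha.1 hc.1 hac) (hcl hb.1 hc.1 hbc)
      (hcl ha.1 hu hneau) (hcl hb.1 hu hnebu) (hcl hc.1 hu hnecu)
      ha.2.symm hb.2.symm hc.2.symm
  have avoid : ∀ s : Finset V, s.card ≤ 6 → ∃ k, k ∈ K ∧ k ∉ s := by
    intro s hs
    have h1 : (K \ s).Nonempty := by
      rw [← Finset.card_pos]
      have := Finset.le_card_sdiff s K
      omega
    obtain ⟨k, hk⟩ := h1
    rw [Finset.mem_sdiff] at hk
    exact ⟨k, hk.1, hk.2⟩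
  have cardU3 : ∀ s t u : Finset V, s.card ≤ 2 → t.card ≤ 2 → u.card ≤ 2 →
      (s ∪ t ∪ u).card ≤ 6 := by
    intro s t u h1 h2 h3
    have i1 := Finset.card_union_le (s ∪ t) u
    have i2 := Finset.card_union_le s t
    omega
  have notAdj : ∀ {k v : V}, k ∈ K → k ∉ S v → ¬ G.Adj k v := by
    intro k v hk hns h
    exact hns (hSmem.mpr ⟨hk, h.symm⟩)
  have P5core : ∀ z ∈ D, ∀ a ∈ D, ∀ b ∈ D, ∀ k ∈ K,
      G.Adj z a → G.Adj a b → G.Adj b k → ¬ G.Adj z b → ¬ G.Adj a k → ¬ G.Adj z k →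
      False := by
    intro z hz a ha b hb k hk hza hab hbk hzb hak hzk
    obtain ⟨k', hk'K, hk's⟩ := avoid (S z ∪ S a ∪ S b)
      (cardU3 _ _ _ (L1 z hz) (L1 a ha) (L1 b hb))
    simp only [Finset.mem_union, not_or] at hk's
    obtain ⟨⟨hsz, hsa⟩, hsb⟩ := hk's
    have hkk' : k ≠ k' := fun h => hsb (h ▸ hSmem.mpr ⟨hk, hbk⟩)
    exact p5free_aux hP5 z a b k k' hza hab hbk (hcl hk hk'K hkk')
      hzb hzk (fun h => notAdj hk'K hsz h.symm)
      hak (fun h => notAdj hk'K hsa h.symm) (fun h => notAdj hk'K hsb h.symm)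
  have elemma : ∀ a ∈ D, ∀ c ∈ D, ∀ b ∈ D, ∀ ka ∈ K,
      G.Adj ka a → ¬ G.Adj ka c → ¬ G.Adj ka b →
      G.Adj a c → G.Adj c b → ¬ G.Adj a b → False := by
    intro a ha c hc b hb ka hkaK h1 h2 h3 hac hcb hab
    obtain ⟨k', hk'K, hk's⟩ := avoid (S a ∪ S c ∪ S b)
      (cardU3 _ _ _ (L1 a ha) (L1 c hc) (L1 b hb))
    simp only [Finset.mem_union, not_or] at hk's
    obtain ⟨⟨hsa, hsc⟩, hsb⟩ := hk's
    have hkk' : k' ≠ ka := fun h => hsa (h ▸ hSmem.mpr ⟨hkaK, h1.symm⟩)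
    exact p5free_aux hP5 k' ka a c b (hcl hk'K hkaK hkk') h1 hac hcb
      (fun h => notAdj hk'K hsa h)
      (fun h => notAdj hk'K hsc h)
      (fun h => notAdj hk'K hsb h)
      h2 h3 hab
  by_cases hDe : ∀ v : V, v ∈ K
  · left
    refine ⟨↑K, ∅, ?_, hcl, ?_⟩
    · ext v; simp [hDe v]
    · simp
  · push_neg at hDe
    obtain ⟨d0, hd0⟩ := hDe
    have hd0D : d0 ∈ D := hd0
    by_cases hH : (∀ a b : ↥D, (G.induce D).Reachable a b) ∧
        (∀ k ∈ K, ∃ d ∈ D, G.Adj k d)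
    · -- connected dominating case : D is a clique
      left
      have M1 : ∀ k ∈ K, ∀ a b : ↥D, (G.induce D).Walk a b → G.Adj k ↑b → ¬ G.Adj k ↑a →
          ∃ w ∈ D, G.Adj (↑a) w ∧ G.Adj k w := by
        intro k hk a b p
        induction p with
        | nil => intro h1 h2; exact absurd h1 h2
        | @cons x y zz h p ih =>
          intro h1 h2
          by_cases hky : G.Adj k ↑y
          · exact ⟨↑y, y.2, by simpa using h, hky⟩
          · obtain ⟨w, hwD, hyw, hkw⟩ := ih h1 hky
            by_cases hxw : G.Adj ↑x w
            · exact ⟨w, hwD, hxw, hkw⟩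
            · exact absurd (P5core (↑x) x.2 (↑y) y.2 w hwD k hk (by simpa using h)
                hyw hkw.symm hxw (fun hh => hky hh.symm) (fun hh => h2 hh.symm)) not_false
      have hit : ∀ x ∈ D, ∀ z ∈ D, ∀ y ∈ D, G.Adj x z → G.Adj z y → ∀ k ∈ K,
          ¬ G.Adj k x → ¬ G.Adj k y →
          ∃ w ∈ D, G.Adj w x ∧ G.Adj w y ∧ G.Adj k w := by
        intro x hx z hz y hy hxz hzy k hk hkx hky
        by_cases hkz : G.Adj k z
        · exact ⟨z, hz, hxz.symm, hzy, hkz⟩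
        · obtain ⟨d1, hd1D, hkd1⟩ := hH.2 k hk
          obtain ⟨p⟩ := hH.1 ⟨z, hz⟩ ⟨d1, hd1D⟩
          obtain ⟨w, hwD, hzw, hkw⟩ := M1 k hk ⟨z, hz⟩ ⟨d1, hd1D⟩ p hkd1 hkz
          have hwx : G.Adj w x := by
            by_contra hwx
            exact P5core x hx z hz w hwD k hk hxz hzw hkw.symm
              (fun h => hwx h.symm) (fun h => hkz h.symm) (fun h => hkx h.symm)
          have hwy : G.Adj w y := by
            by_contra hwy
            exact P5core y hy z hz w hwD k hk hzy.symm hzw hkw.symm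
              (fun h => hwy h.symm) (fun h => hkz h.symm) (fun h => hky h.symm)
          exact ⟨w, hwD, hwx, hwy, hkw⟩
      have P3free : ∀ x ∈ D, ∀ z ∈ D, ∀ y ∈ D, G.Adj x z → G.Adj z y →
          ¬ G.Adj x y → x ≠ y → False := by
        intro x hx z hz y hy hxz hzy hxy hnexy
        obtain ⟨k1, hk1K, hk1s⟩ := avoid (S x ∪ S y) (by
          have i1 := Finset.card_union_le (S x) (S y)
          have := L1 x hx; have := L1 y hy; omega)
        simp only [Finset.mem_union, not_or] at hk1s
        have hk1x : ¬ G.Adj k1 x := notAdj hk1K hk1s.1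
        have hk1y : ¬ G.Adj k1 y := notAdj hk1K hk1s.2
        obtain ⟨w1, hw1D, hw1x, hw1y, hk1w1⟩ :=
          hit x hx z hz y hy hxz hzy k1 hk1K hk1x hk1y
        obtain ⟨k2, hk2K, hk2s⟩ := avoid (S x ∪ S y ∪ S w1)
          (cardU3 _ _ _ (L1 x hx) (L1 y hy) (L1 w1 hw1D))
        simp only [Finset.mem_union, not_or] at hk2s
        obtain ⟨⟨hs2x, hs2y⟩, hs2w1⟩ := hk2s
        have hk2x : ¬ G.Adj k2 x := notAdj hk2K hs2x
        have hk2y : ¬ G.Adj k2 y := notAdj hk2K hs2y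
        have hk2w1 : ¬ G.Adj k2 w1 := notAdj hk2K hs2w1
        obtain ⟨w2, hw2D, hw2x, hw2y, hk2w2⟩ :=
          hit x hx z hz y hy hxz hzy k2 hk2K hk2x hk2y
        have h12 : G.Adj w1 w2 := by
          by_contra h
          exact elemma w2 hw2D x hx w1 hw1D k2 hk2K hk2w2 hk2x hk2w1
            hw2x hw1x.symm (fun hh => h hh.symm)
        obtain ⟨k3, hk3K, hk3s⟩ := avoid ((S x ∩ S y) ∪ S w1 ∪ S w2)
          (cardU3 _ _ _ (le_trans (Finset.card_le_card Finset.inter_subset_left) (L1 x hx))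
            (L1 w1 hw1D) (L1 w2 hw2D))
        simp only [Finset.mem_union, not_or] at hk3s
        obtain ⟨⟨hs3i, hs3w1⟩, hs3w2⟩ := hk3s
        have hk3w1 : ¬ G.Adj k3 w1 := notAdj hk3K hs3w1
        have hk3w2 : ¬ G.Adj k3 w2 := notAdj hk3K hs3w2
        have hk3x : ¬ G.Adj k3 x := by
          intro h
          by_cases hky : G.Adj k3 y
          · exact hs3i (Finset.mem_inter.mpr
              ⟨hSmem.mpr ⟨hk3K, h.symm⟩, hSmem.mpr ⟨hk3K, hky.symm⟩⟩)
          · exact elemma x hx w1 hw1D y hy k3 hk3K h hk3w1 hky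
              hw1x.symm hw1y hxy
        have hk3y : ¬ G.Adj k3 y := by
          intro h
          exact elemma y hy w1 hw1D x hx k3 hk3K h hk3w1 hk3x
            hw1y.symm hw1x (fun hh => hxy hh.symm)
        obtain ⟨w3, hw3D, hw3x, hw3y, hk3w3⟩ :=
          hit x hx z hz y hy hxz hzy k3 hk3K hk3x hk3y
        have h13 : G.Adj w1 w3 := by
          by_contra h
          exact elemma w3 hw3D x hx w1 hw1D k3 hk3K hk3w3 hk3x hk3w1
            hw3x hw1x.symm (fun hh => h hh.symm)
        have h23 : G.Adj w2 w3 := by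
          by_contra h
          exact elemma w3 hw3D x hx w2 hw2D k3 hk3K hk3w3 hk3x hk3w2
            hw3x hw2x.symm (fun hh => h hh.symm)
        exact k5e_aux hK5e x y w1 w2 w3 hxy hnexy h12 h13 h23
          hw1x hw2x hw3x hw1y hw2y hw3y
      have W : ∀ a b : ↥D, (G.induce D).Walk a b → (↑a : V) ≠ ↑b → G.Adj ↑a ↑b := by
        intro a b p
        induction p with
        | nil => intro h; exact absurd rfl h
        | @cons x y zz h p ih =>
          intro hne
          by_cases hyz : (↑y : V) = ↑zz
          · exact hyz ▸ (by simpa using h : G.Adj (↑x) (↑y))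
          · have hyzadj := ih hyz
            by_contra hxz
            exact P3free (↑x) x.2 (↑y) y.2 (↑zz) zz.2 (by simpa using h) hyzadj hxz hne
      refine ⟨↑K, D, ?_, hcl, ?_⟩
      · ext v
        by_cases hvK : v ∈ K <;> simp [hD, hvK]
      · intro u hu v hv hne
        obtain ⟨p⟩ := hH.1 ⟨u, hu⟩ ⟨v, hv⟩
        exact W _ _ p hne
    · -- clique cutset case
      right
      set C : Set V := {v | ∃ hv : v ∈ D, (G.induce D).Reachable ⟨d0, hd0D⟩ ⟨v, hv⟩}
        with hC
      have hCD : C ⊆ D := fun v hv => hv.1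
      set KC : Set V := {v | v ∈ K ∧ ∃ c ∈ C, G.Adj v c} with hKC
      set B : Set V := ((↑K : Set V) \ KC) ∪ (D \ C) with hB
      have hstep : ∀ a ∈ C, ∀ b, b ∈ D → G.Adj a b → b ∈ C := by
        intro a ha b hbD hab
        obtain ⟨haD, hra⟩ := ha
        have hadj : (G.induce D).Adj ⟨a, haD⟩ ⟨b, hbD⟩ := by simpa using hab
        exact ⟨hbD, hra.trans hadj.reachable⟩
      refine ⟨KC, C, B, ?_, ⟨d0, hd0D, Reachable.refl _⟩, ?_, ?_, ?_, ?_, ?_, ?_⟩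
      · intro a ha b hb hne
        exact hcl ha.1 hb.1 hne
      · -- B nonempty
        rw [not_and_or] at hH
        rcases hH with h1 | h2
        · push_neg at h1
          obtain ⟨a, b, hnr⟩ := h1
          by_cases haC : (↑a : V) ∈ C
          · refine ⟨↑b, Or.inr ⟨b.2, ?_⟩⟩
            intro hbC
            obtain ⟨haD, hra⟩ := haC
            obtain ⟨hbD, hrb⟩ := hbC
            exact hnr (by
              have e1 : (⟨↑a, haD⟩ : ↥D) = a := Subtype.ext rfl
              have e2 : (⟨↑b, hbD⟩ : ↥D) = b := Subtype.ext rfl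
              rw [e1] at hra
              rw [e2] at hrb
              exact hra.symm.trans hrb)
          · exact ⟨↑a, Or.inr ⟨a.2, haC⟩⟩
        · push_neg at h2
          obtain ⟨k, hkK, hko⟩ := h2
          refine ⟨k, Or.inl ⟨hkK, ?_⟩⟩
          intro hkC
          obtain ⟨c, hcC, hkc⟩ := hkC.2
          exact hko c (hCD hcC) hkc
      · -- Disjoint C B
        rw [Set.disjoint_left]
        intro a haC haB
        rcases haB with h | h
        · exact (hCD haC) h.1
        · exact h.2 haC
      · -- Disjoint KC C
        rw [Set.disjoint_left]
        intro a haKC haC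
        exact (hCD haC) haKC.1
      · -- Disjoint KC B
        rw [Set.disjoint_left]
        intro a haKC haB
        rcases haB with h | h
        · exact h.2 haKC
        · exact h.1 haKC.1
      · -- union
        ext v
        simp only [Set.mem_union, Set.mem_univ, iff_true]
        by_cases hvK : v ∈ K
        · by_cases hvKC : v ∈ KC
          · exact Or.inl (Or.inl hvKC)
          · exact Or.inr (Or.inl ⟨hvK, hvKC⟩)
        · by_cases hvC : v ∈ C
          · exact Or.inl (Or.inr hvC)
          · exact Or.inr (Or.inr ⟨hvK, hvC⟩)
      · -- separation
        intro a haC b hbB hadj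
        rcases hbB with h | h
        · exact h.2 ⟨h.1, a, haC, hadj.symm⟩
        · exact h.2 (hstep a haC b h.1 hadj)
end

section
/- Let G be a graph whose vertex set can be partitioned into two cliques (i.e., G is the complement of a bipartite graph). Then χ(G) = ω(G). -/
open SimpleGraph

open Finset in

lemma aux_cliqueNum_le_chromaticNumber {V : Type*} [Fintype V] (G : SimpleGraph V) :
    (G.cliqueNum : ℕ∞) ≤ G.chromaticNumber := by
  obtain ⟨s, hs⟩ := G.exists_isNClique_cliqueNum
  have hcol := G.colorable_chromaticNumber_of_fintype
  obtain ⟨C⟩ := hcol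
  have hcard : s.card ≤ ENat.toNat G.chromaticNumber := by
    calc s.card ≤ (Finset.univ : Finset (Fin (ENat.toNat G.chromaticNumber))).card := by
          apply Finset.card_le_card_of_injOn C (fun _ _ => Finset.mem_univ _)
          intro a ha b hb heq
          by_contra hne
          exact C.valid (hs.1 ha hb hne) heq
      _ = _ := by simp
  have hne : G.chromaticNumber ≠ ⊤ :=
    chromaticNumber_ne_top_iff_exists.2 ⟨_, G.colorable_of_fintype⟩
  calc (G.cliqueNum : ℕ∞) = (s.card : ℕ∞) := by rw [hs.2]
    _ ≤ (ENat.toNat G.chromaticNumber : ℕ∞) := by exact_mod_cast hcard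
    _ = G.chromaticNumber := ENat.coe_toNat hne

theorem stmt_18 {V : Type*} [Fintype V] (G : SimpleGraph V)
    (A B : Set V) (hcover : A ∪ B = Set.univ)
    (hA : G.IsClique A) (hB : G.IsClique B) :
    G.chromaticNumber = (G.cliqueNum : ℕ∞) := by
  classical
  set Xf : Finset V := Finset.univ.filter (· ∈ A) with hXf
  set Yf : Finset V := Finset.univ.filter (· ∉ A) with hYf
  have hXA : ∀ x ∈ Xf, x ∈ A := by intro x hx; simpa [hXf] using hx
  have hYA : ∀ y ∈ Yf, y ∉ A := by intro y hy; simpa [hYf] using hy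
  have hYB : ∀ y ∈ Yf, y ∈ B := by
    intro y hy
    have : y ∈ A ∪ B := hcover ▸ Set.mem_univ y
    rcases this with h | h
    · exact absurd h (hYA y hy)
    · exact h
  set Nf : Finset V → Finset V := fun S => Yf.filter (fun y => ∃ x ∈ S, ¬ G.Adj x y) with hNf
  have hNfsub : ∀ S, Nf S ⊆ Yf := fun S => Finset.filter_subset _ _
  -- maximizer of deficiency
  obtain ⟨S₀, hS₀p, hS₀max⟩ := Finset.exists_max_image Xf.powerset
    (fun S => (S.card : ℤ) - ((Nf S).card : ℤ)) ⟨∅, Finset.empty_mem_powerset _⟩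
  have hS₀ : S₀ ⊆ Xf := Finset.mem_powerset.1 hS₀p
  have hd0 : (Nf S₀).card ≤ S₀.card := by
    have h := hS₀max ∅ (Finset.empty_mem_powerset _)
    have : Nf ∅ = ∅ := by simp [hNf]
    rw [this] at h
    simp at h
    omega
  set d : ℕ := S₀.card - (Nf S₀).card with hd
  -- Hall setup
  set t : {x // x ∈ Xf} → Finset (V ⊕ Fin d) :=
    fun x => ((Nf {x.1}).image Sum.inl) ∪ (Finset.univ.image Sum.inr) with ht
  have hall : ∀ s : Finset {x // x ∈ Xf}, s.card ≤ (s.biUnion t).card := by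
    intro s
    rcases s.eq_empty_or_nonempty with rfl | hsne
    · simp
    set S : Finset V := s.image Subtype.val with hS
    have hScard : S.card = s.card := Finset.card_image_of_injective _ Subtype.val_injective
    have hsub : ((Nf S).image Sum.inl ∪ (Finset.univ.image Sum.inr : Finset (V ⊕ Fin d)))
        ⊆ s.biUnion t := by
      intro z hz
      rcases Finset.mem_union.1 hz with hz | hz
      · obtain ⟨y, hy, rfl⟩ := Finset.mem_image.1 hz
        have hy' := Finset.mem_filter.1 hy
        obtain ⟨x, hxS, hxy⟩ := hy'.2
        obtain ⟨x', hx's, rfl⟩ := Finset.mem_image.1 hxS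
        refine Finset.mem_biUnion.2 ⟨x', hx's, ?_⟩
        apply Finset.mem_union_left
        refine Finset.mem_image.2 ⟨y, ?_, rfl⟩
        exact Finset.mem_filter.2 ⟨hy'.1, x'.1, Finset.mem_singleton_self _, hxy⟩
      · obtain ⟨x', hx's⟩ := hsne
        exact Finset.mem_biUnion.2 ⟨x', hx's, Finset.mem_union_right _ hz⟩
    have hdisj : Disjoint ((Nf S).image Sum.inl)
        ((Finset.univ.image Sum.inr : Finset (V ⊕ Fin d))) := by
      simp [Finset.disjoint_left]
    have hcard : (Nf S).card + d ≤ (s.biUnion t).card := by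
      calc (Nf S).card + d
          = ((Nf S).image Sum.inl ∪ (Finset.univ.image Sum.inr : Finset (V ⊕ Fin d))).card := by
            rw [Finset.card_union_of_disjoint hdisj,
              Finset.card_image_of_injective _ Sum.inl_injective,
              Finset.card_image_of_injective _ Sum.inr_injective]
            simp
        _ ≤ _ := Finset.card_le_card hsub
    have hSmax : (S.card : ℤ) - (Nf S).card ≤ (S₀.card : ℤ) - (Nf S₀).card := by
      apply hS₀max
      refine Finset.mem_powerset.2 ?_
      intro v hv
      obtain ⟨x', _, rfl⟩ := Finset.mem_image.1 hv
      exact x'.2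
    omega
  obtain ⟨f, hfinj, hft⟩ := (Finset.all_card_le_biUnion_card_iff_exists_injective t).1 hall
  -- the color set
  set Cset : Finset (V ⊕ Fin d) := Yf.image Sum.inl ∪ Finset.univ.image Sum.inr with hCset
  have hmemC : ∀ x : {x // x ∈ Xf}, f x ∈ Cset := by
    intro x
    rcases Finset.mem_union.1 (hft x) with h | h
    · obtain ⟨y, hy, hy'⟩ := Finset.mem_image.1 h
      rw [← hy']
      exact Finset.mem_union_left _ (Finset.mem_image.2 ⟨y, hNfsub _ hy, rfl⟩)
    · exact Finset.mem_union_right _ h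
  have hmemC' : ∀ v : V, v ∉ Xf → (Sum.inl v : V ⊕ Fin d) ∈ Cset := by
    intro v hv
    apply Finset.mem_union_left
    refine Finset.mem_image.2 ⟨v, ?_, rfl⟩
    simp only [hXf, hYf, Finset.mem_filter, Finset.mem_univ, true_and] at hv ⊢
    exact hv
  -- the coloring
  set c : V → {z // z ∈ Cset} := fun v =>
    if h : v ∈ Xf then ⟨f ⟨v, h⟩, hmemC ⟨v, h⟩⟩ else ⟨Sum.inl v, hmemC' v h⟩ with hc
  have hkey : ∀ (u v : V) (hu : u ∈ Xf), v ∉ Xf → f ⟨u, hu⟩ = Sum.inl v → ¬ G.Adj u v := by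
    intro u v hu hv heq
    have := hft ⟨u, hu⟩
    rw [heq] at this
    rcases Finset.mem_union.1 this with h | h
    · obtain ⟨y, hy, hy'⟩ := Finset.mem_image.1 h
      have : y = v := Sum.inl_injective hy'
      subst this
      have := (Finset.mem_filter.1 hy).2
      obtain ⟨x, hx, hxy⟩ := this
      rw [Finset.mem_singleton.1 hx] at hxy
      exact hxy
    · obtain ⟨j, _, hj⟩ := Finset.mem_image.1 h
      exact absurd hj (by simp)
  have hvalid : ∀ {u v : V}, G.Adj u v → c u ≠ c v := by
    intro u v hadj hcc
    have hne : u ≠ v := hadj.ne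
    by_cases hu : u ∈ Xf <;> by_cases hv : v ∈ Xf <;> simp [hc, hu, hv] at hcc
    · exact hne (congrArg Subtype.val (hfinj hcc))
    · exact hkey u v hu hv hcc hadj
    · exact hkey v u hv hu hcc.symm hadj.symm
    · exact hne hcc
  have hcol : G.Colorable (Fintype.card {z // z ∈ Cset}) :=
    (Coloring.mk c hvalid).colorable
  have hCsetcard : Fintype.card {z // z ∈ Cset} = Yf.card + d := by
    rw [Fintype.card_coe, hCset, Finset.card_union_of_disjoint (by simp [Finset.disjoint_left]),
      Finset.card_image_of_injective _ Sum.inl_injective,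
      Finset.card_image_of_injective _ Sum.inr_injective]
    simp
  -- the big clique
  set K : Finset V := S₀ ∪ (Yf \ Nf S₀) with hK
  have hKclique : G.IsClique (K : Set V) := by
    intro u hu v hv hne
    simp only [hK, Finset.coe_union, Set.mem_union, Finset.coe_sdiff, Set.mem_diff,
      Finset.mem_coe] at hu hv
    have cross : ∀ a b, a ∈ S₀ → b ∈ Yf ∧ b ∉ Nf S₀ → a ≠ b → G.Adj a b := by
      intro a b ha hb hab
      by_contra hnadj
      exact hb.2 (Finset.mem_filter.2 ⟨hb.1, a, ha, hnadj⟩)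
    rcases hu with hu | hu <;> rcases hv with hv | hv
    · exact hA (hXA u (hS₀ hu)) (hXA v (hS₀ hv)) hne
    · exact cross u v hu hv hne
    · exact (cross v u hv hu hne.symm).symm
    · exact hB (hYB u hu.1) (hYB v hv.1) hne
  have hKdisj : Disjoint S₀ (Yf \ Nf S₀) := by
    intro s hs1 hs2 x hx
    have h1 := hXA x (hS₀ (hs1 hx))
    have h2 := hYA x (Finset.mem_sdiff.1 (hs2 hx)).1
    exact absurd h1 h2
  have hNfY : (Nf S₀).card ≤ Yf.card := Finset.card_le_card (hNfsub S₀)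
  have hKcard : Yf.card + d ≤ K.card := by
    rw [hK, Finset.card_union_of_disjoint hKdisj, Finset.card_sdiff_of_subset (hNfsub S₀)]
    omega
  have hωK : Yf.card + d ≤ G.cliqueNum := by
    calc Yf.card + d ≤ K.card := hKcard
      _ ≤ G.cliqueNum := IsClique.card_le_cliqueNum (tc := hKclique)
  refine le_antisymm ?_ (aux_cliqueNum_le_chromaticNumber G)
  calc G.chromaticNumber ≤ (Fintype.card {z // z ∈ Cset} : ℕ∞) := hcol.chromaticNumber_le
    _ = ((Yf.card + d : ℕ) : ℕ∞) := by rw [hCsetcard]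
    _ ≤ (G.cliqueNum : ℕ∞) := by exact_mod_cast hωK
end
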